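/- arXiv:2307.11059 — 3 statements merged into one kernel-verified Lean document; each statement's English description precedes it below -/
import Mathlib

section
/- Let D be a dense countably infinite mesh in I^n with an enumeration (d_i)_{i∈ℕ} of its elements, and fix an integer k with 1 ≤ k ≤ n. Let A, B : D → I be functions with A ≤ B and L_k^{(A,B)}(DU) ≥ 0 for all DU ∈ R_k(D), and assume A(v) = B(v) for all vertices v of the unit cube I^n. Define the sequence of functions B^{(i)} : D → I by B^{(0)} = B and, for i ≥ 1, B^{(i)}(d) = B^{(i−1)}(d) for d ≠ d_i and B^{(i)}(d_i) = B^{(i−1)}(d_i) − δ_{k,D}^{(A,B^{(i−1)})}(d_i). Let C : D → I be the pointwise limit of (B^{(i)})_{i∈ℕ} (which exists since at each point the sequence is decreasing and bounded). Then C is k-increasing on D, i.e., L_k^{(C,C)}(DU) ≥ 0 for all DU ∈ R_k(D). -/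
open scoped Classical BigOperators

namespace KIncr

/-- Points of the ambient space `ℝ^n`. -/
abbrev Pt (n : ℕ) := Fin n → ℝ

/-- Membership in the unit cube `I^n = [0,1]^n`. -/
def inCube {n : ℕ} (x : Pt n) : Prop := ∀ i, x i ∈ Set.Icc (0:ℝ) 1

/-- The unit cube as a set. -/
def cubeSet (n : ℕ) : Set (Pt n) := {x | inCube x}

/-- Vertices of the unit cube `I^n`. -/
def isCubeVertex {n : ℕ} (x : Pt n) : Prop := ∀ i, x i = 0 ∨ x i = 1

/-- A (formal) box, given by its lower-left and upper-right corners. -/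
structure Box (n : ℕ) where
  lo : Pt n
  hi : Pt n

/-- `R` is a `k`-box in `I^n`: exactly `k` coordinates are nondegenerate. -/
def Box.IsKBox {n : ℕ} (k : ℕ) (R : Box n) : Prop :=
  inCube R.lo ∧ inCube R.hi ∧ (∀ i, R.lo i ≤ R.hi i) ∧
    (Finset.univ.filter (fun i => R.lo i < R.hi i)).card = k

/-- `v` is a vertex of the box `R`. -/
def Box.IsVertex {n : ℕ} (R : Box n) (v : Pt n) : Prop :=
  ∀ i, v i = R.lo i ∨ v i = R.hi i

/-- The (finite) set of vertices of a box. -/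
noncomputable def Box.vertices {n : ℕ} (R : Box n) : Finset (Pt n) :=
  Finset.image (fun ε : Fin n → Bool => fun i => if ε i then R.hi i else R.lo i)
    Finset.univ

/-- The sign `(-1)^(m-(n-k))` of a vertex `v` of a `k`-box, where
`m = #{i : v i = lo i}`;  since `m ≥ n - k`, this equals `(-1)^(m+(n-k))`. -/
noncomputable def Box.sign {n : ℕ} (k : ℕ) (R : Box n) (v : Pt n) : ℤ :=
  (-1) ^ ((Finset.univ.filter (fun i => v i = R.lo i)).card + (n - k))

/-- The multiplicity `m_R(u)` of a point `u` with respect to a `k`-box `R`. -/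
noncomputable def Box.mult {n : ℕ} (k : ℕ) (R : Box n) (u : Pt n) : ℤ :=
  if R.IsVertex u then R.sign k u else 0

/-- `V_{A,k}(R) = ∑_{v ∈ ver R} sign_R(v) · A(v)`. -/
noncomputable def Vvol {n : ℕ} (k : ℕ) (A : Pt n → ℝ) (R : Box n) : ℝ :=
  ∑ v ∈ R.vertices, (R.sign k v : ℝ) * A v

/-- A function is `k`-increasing on `D` if `V_{A,k}(R) ≥ 0` for every `k`-box
with all vertices in `D`. -/
def KIncreasingOn {n : ℕ} (k : ℕ) (D : Set (Pt n)) (A : Pt n → ℝ) : Prop :=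
  ∀ R : Box n, R.IsKBox k → (∀ v ∈ R.vertices, v ∈ D) → 0 ≤ Vvol k A R

/-- The multiplicity `m_DU(u)` of a point with respect to a formal (multiset)
disjoint union of `k`-boxes. -/
noncomputable def multDU {n : ℕ} (k : ℕ) (DU : Multiset (Box n)) (u : Pt n) : ℤ :=
  (DU.map (fun R => R.mult k u)).sum

/-- `DU ∈ R_k(D)`: every box of the multiset `DU` is a `k`-box with all its
vertices in `D`. -/
def memRk {n : ℕ} (k : ℕ) (D : Set (Pt n)) (DU : Multiset (Box n)) : Prop :=
  ∀ R ∈ DU, R.IsKBox k ∧ ∀ v ∈ R.vertices, v ∈ D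

/-- `L_k^{(A,B)}(DU) = ∑_{m_DU(u)>0} m_DU(u)·B(u) + ∑_{m_DU(u)<0} m_DU(u)·A(u)`. -/
noncomputable def Lk {n : ℕ} (k : ℕ) (A B : Pt n → ℝ) (DU : Multiset (Box n)) : ℝ :=
  ∑ u ∈ DU.toFinset.biUnion Box.vertices,
    (if 0 < multDU k DU u then (multDU k DU u : ℝ) * B u
     else if multDU k DU u < 0 then (multDU k DU u : ℝ) * A u else 0)

/-- `P⁻_{k,D}^{(A,B)}(x)`, with the Mathlib convention `sInf ∅ = 0`. -/
noncomputable def Pneg {n : ℕ} (k : ℕ) (D : Set (Pt n)) (A B : Pt n → ℝ) (x : Pt n) : ℝ :=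
  sInf {r : ℝ | ∃ DU : Multiset (Box n), memRk k D DU ∧ multDU k DU x < 0 ∧
    r = Lk k A B DU / |(multDU k DU x : ℝ)|}

/-- `P⁺_{k,D}^{(A,B)}(x)`, with the Mathlib convention `sInf ∅ = 0`. -/
noncomputable def Ppos {n : ℕ} (k : ℕ) (D : Set (Pt n)) (A B : Pt n → ℝ) (x : Pt n) : ℝ :=
  sInf {r : ℝ | ∃ DU : Multiset (Box n), memRk k D DU ∧ 0 < multDU k DU x ∧
    r = Lk k A B DU / |(multDU k DU x : ℝ)|}

/-- `γ_{k,D}^{(A,B)}(x) = min {P⁻_{k,D}^{(A,B)}(x), B(x) - A(x)}`. -/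
noncomputable def gammaK {n : ℕ} (k : ℕ) (D : Set (Pt n)) (A B : Pt n → ℝ) (x : Pt n) : ℝ :=
  min (Pneg k D A B x) (B x - A x)

/-- `δ_{k,D}^{(A,B)}(x) = min {P⁺_{k,D}^{(A,B)}(x), B(x) - A(x)}`. -/
noncomputable def deltaK {n : ℕ} (k : ℕ) (D : Set (Pt n)) (A B : Pt n → ℝ) (x : Pt n) : ℝ :=
  min (Ppos k D A B x) (B x - A x)

/-- A dense countably infinite mesh `D = ∏ δᵢ` in `I^n`. -/
def IsMesh {n : ℕ} (D : Set (Pt n)) : Prop :=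
  ∃ δ : Fin n → Set ℝ,
    (∀ i, δ i ⊆ Set.Icc (0:ℝ) 1 ∧ (δ i).Countable ∧ (δ i).Infinite ∧
      Set.Icc (0:ℝ) 1 ⊆ closure (δ i) ∧ (0:ℝ) ∈ δ i ∧ (1:ℝ) ∈ δ i) ∧
    D = {x : Pt n | ∀ i, x i ∈ δ i}

/-- `A` is grounded: it vanishes whenever some coordinate is `0`. -/
def Grounded {n : ℕ} (A : Pt n → ℝ) : Prop :=
  ∀ x : Pt n, inCube x → (∃ i, x i = 0) → A x = 0

/-- `A` is 1-increasing (increasing in each variable). -/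
def OneIncreasing {n : ℕ} (A : Pt n → ℝ) : Prop :=
  ∀ x y : Pt n, inCube x → inCube y → (∀ i, x i ≤ y i) → A x ≤ A y

/-- `A` has uniform marginals. -/
def UniformMarginals {n : ℕ} (A : Pt n → ℝ) : Prop :=
  ∀ i : Fin n, ∀ t ∈ Set.Icc (0:ℝ) 1, A (Function.update (fun _ => (1:ℝ)) i t) = t

/-- `A` is a standardized function. -/
def Standardized {n : ℕ} (A : Pt n → ℝ) : Prop :=
  Grounded A ∧ OneIncreasing A ∧ A (fun _ => (1:ℝ)) = 1

/-- `A` is a semicopula. -/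
def Semicopula {n : ℕ} (A : Pt n → ℝ) : Prop :=
  Grounded A ∧ OneIncreasing A ∧ UniformMarginals A

/-- `A` maps the unit cube into `I = [0,1]`. -/
def MapsToI {n : ℕ} (A : Pt n → ℝ) : Prop :=
  ∀ x : Pt n, inCube x → A x ∈ Set.Icc (0:ℝ) 1

/-- Condition S: all discontinuities of all sections of `A` lie in the
countable set `S`. -/
def CondS {n : ℕ} (A : Pt n → ℝ) (S : Set ℝ) : Prop :=
  ∀ u : Pt n, inCube u → ∀ i : Fin n, ∀ t ∈ Set.Icc (0:ℝ) 1, t ∉ S →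
    ContinuousWithinAt (fun s => A (Function.update u i s)) (Set.Icc (0:ℝ) 1) t

/-- A quasi-copula: a semicopula that is 1-Lipschitz w.r.t. the ℓ¹-norm. -/
def QuasiCopula {n : ℕ} (A : Pt n → ℝ) : Prop :=
  Semicopula A ∧ ∀ x y : Pt n, inCube x → inCube y → |A x - A y| ≤ ∑ i, |x i - y i|

end KIncr

/-!
Lowering `B` at a point `x` by `δ_{k,D}^{(A,B)}(x)` keeps `A ≤ B` and `L_k^{(A,B)} ≥ 0`, since
`δ ≤ P⁺`; both properties pass to the decreasing limit `C`. If `A x < C x`, then at the step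
where `x` was lowered the minimum defining `δ` was `P⁺`, so the infimum `P⁺_{k,D}^{(A,C)}(x)`
vanishes; its defining set is nonempty because `x` is not a vertex of the cube, so some `k`-box
with all vertices in the mesh has `x` as a vertex of sign `+1`.

Then `A` is raised to `C` one point `x` at a time, keeping `L(·, C) ≥ 0`: a union `DU` with
multiplicity `-q < 0` at `x` is combined with `q` copies of a union `E` of multiplicity `p > 0`
at `x` and `L(A, C)(E) ≤ ε p`. In `p • DU + q • E` the multiplicities cancel at `x`, and
`L(A, C)` is subadditive on unions because `m ↦ m⁺` is. Once `A` equals `C` at every vertex of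
`DU`, this gives `L(C, C)(DU) ≥ 0`.
-/

namespace KIncr

variable {n k : ℕ}

lemma Box.mem_vertices {R : Box n} {v : Pt n} : v ∈ R.vertices ↔ R.IsVertex v := by
  constructor
  · rintro hv i
    obtain ⟨ε, -, rfl⟩ := Finset.mem_image.1 hv
    by_cases h : ε i <;> simp [h]
  · intro hv
    refine Finset.mem_image.2
      ⟨fun i => decide (v i = R.hi i), Finset.mem_univ _, funext fun i => ?_⟩
    by_cases h : v i = R.hi i
    · simp [h]
    · simpa [h] using ((hv i).resolve_right h).symm

noncomputable def vertexSet (DU : Multiset (Box n)) : Finset (Pt n) :=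
  DU.toFinset.biUnion Box.vertices

lemma multDU_eq_zero_of_notMem {DU : Multiset (Box n)} {u : Pt n} (h : u ∉ vertexSet DU) :
    multDU k DU u = 0 := by
  refine Multiset.sum_eq_zero fun z hz => ?_
  obtain ⟨R, hR, rfl⟩ := Multiset.mem_map.1 hz
  rw [Box.mult, if_neg fun hv => h ?_]
  exact Finset.mem_biUnion.2 ⟨R, Multiset.mem_toFinset.2 hR, Box.mem_vertices.2 hv⟩

lemma multDU_add (DU₁ DU₂ : Multiset (Box n)) (u : Pt n) :
    multDU k (DU₁ + DU₂) u = multDU k DU₁ u + multDU k DU₂ u := by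
  simp [multDU]

lemma multDU_nsmul (t : ℕ) (DU : Multiset (Box n)) (u : Pt n) :
    multDU k (t • DU) u = t * multDU k DU u := by
  simp [multDU, Multiset.map_nsmul, Multiset.sum_nsmul]

lemma memRk.vertexSet_subset {D : Set (Pt n)} {DU : Multiset (Box n)} (h : memRk k D DU) :
    ∀ u ∈ vertexSet DU, u ∈ D := by
  intro u hu
  obtain ⟨R, hR, huR⟩ := Finset.mem_biUnion.1 hu
  exact (h R (Multiset.mem_toFinset.1 hR)).2 u huR

lemma memRk.add {D : Set (Pt n)} {DU₁ DU₂ : Multiset (Box n)} (h₁ : memRk k D DU₁)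
    (h₂ : memRk k D DU₂) : memRk k D (DU₁ + DU₂) := by
  intro R hR
  rcases Multiset.mem_add.1 hR with h | h
  exacts [h₁ R h, h₂ R h]

lemma memRk.nsmul {D : Set (Pt n)} {DU : Multiset (Box n)} (h : memRk k D DU) (t : ℕ) :
    memRk k D (t • DU) :=
  fun R hR => h R (Multiset.mem_of_mem_nsmul hR)

lemma Lk_summand_eq (m : ℤ) (a b : ℝ) :
    (if 0 < m then (m : ℝ) * b else if m < 0 then (m : ℝ) * a else 0)
      = (m : ℝ)⁺ * b - (m : ℝ)⁻ * a := by
  rcases lt_trichotomy m 0 with h | rfl | h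
  · have h' : (m : ℝ) < 0 := by exact_mod_cast h
    simp [h, h.not_gt, posPart_eq_zero.2 h'.le, negPart_eq_neg.2 h'.le]
  · simp
  · have h' : (0 : ℝ) < m := by exact_mod_cast h
    simp [h, posPart_eq_self.2 h'.le, negPart_eq_zero.2 h'.le]

lemma Lk_eq_sum {A B : Pt n → ℝ} {DU : Multiset (Box n)} {s : Finset (Pt n)}
    (hs : vertexSet DU ⊆ s) :
    Lk k A B DU = ∑ u ∈ s, ((multDU k DU u : ℝ)⁺ * B u - (multDU k DU u : ℝ)⁻ * A u) := by
  rw [Lk]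
  simp only [Lk_summand_eq]
  refine Finset.sum_subset hs fun u _ hu => ?_
  simp [multDU_eq_zero_of_notMem hu]

lemma Lk_zero (A B : Pt n → ℝ) : Lk k A B 0 = 0 := by
  simp [Lk]

lemma Lk_mono {A A' B B' : Pt n → ℝ} {DU : Multiset (Box n)}
    (hA : ∀ u ∈ vertexSet DU, A' u ≤ A u) (hB : ∀ u ∈ vertexSet DU, B u ≤ B' u) :
    Lk k A B DU ≤ Lk k A' B' DU := by
  rw [Lk_eq_sum subset_rfl, Lk_eq_sum subset_rfl]
  refine Finset.sum_le_sum fun u hu => ?_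
  exact sub_le_sub (mul_le_mul_of_nonneg_left (hB u hu) (posPart_nonneg _))
    (mul_le_mul_of_nonneg_left (hA u hu) (negPart_nonneg _))

lemma Lk_update_right (A B : Pt n → ℝ) (DU : Multiset (Box n)) (x : Pt n) (b : ℝ) :
    Lk k A (Function.update B x b) DU = Lk k A B DU + (multDU k DU x : ℝ)⁺ * (b - B x) := by
  have hs := Finset.subset_insert x (vertexSet DU)
  rw [Lk_eq_sum hs, Lk_eq_sum hs, ← sub_eq_iff_eq_add', ← Finset.sum_sub_distrib,
    Finset.sum_eq_single_of_mem x (Finset.mem_insert_self _ _)]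
  · simp only [Function.update_self]; ring
  · intro u _ hu
    simp [Function.update_of_ne hu]

lemma Lk_update_left (A B : Pt n → ℝ) (DU : Multiset (Box n)) (x : Pt n) (a : ℝ) :
    Lk k (Function.update A x a) B DU = Lk k A B DU - (multDU k DU x : ℝ)⁻ * (a - A x) := by
  have hs := Finset.subset_insert x (vertexSet DU)
  rw [Lk_eq_sum hs, Lk_eq_sum hs, eq_sub_iff_add_eq', ← eq_sub_iff_add_eq, ← Finset.sum_sub_distrib,
    Finset.sum_eq_single_of_mem x (Finset.mem_insert_self _ _)]
  · simp only [Function.update_self]; ring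
  · intro u _ hu
    simp [Function.update_of_ne hu]

lemma Lk_add_le {D : Set (Pt n)} {A B : Pt n → ℝ} (hAB : ∀ u ∈ D, A u ≤ B u)
    {DU₁ DU₂ : Multiset (Box n)} (h₁ : memRk k D DU₁) (h₂ : memRk k D DU₂) :
    Lk k A B (DU₁ + DU₂) ≤ Lk k A B DU₁ + Lk k A B DU₂ := by
  set s := vertexSet (DU₁ + DU₂) ∪ (vertexSet DU₁ ∪ vertexSet DU₂)
  have hs₁ : vertexSet DU₁ ⊆ s := Finset.subset_union_left.trans Finset.subset_union_right
  have hs₂ : vertexSet DU₂ ⊆ s := Finset.subset_union_right.trans Finset.subset_union_right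
  rw [Lk_eq_sum (Finset.subset_union_left : _ ⊆ s), Lk_eq_sum hs₁, Lk_eq_sum hs₂,
    ← Finset.sum_add_distrib]
  refine Finset.sum_le_sum fun u hu => ?_
  have hAB : A u ≤ B u := by
    refine hAB u ?_
    rcases Finset.mem_union.1 hu with h | h
    · exact (h₁.add h₂).vertexSet_subset u h
    rcases Finset.mem_union.1 h with h | h
    exacts [h₁.vertexSet_subset u h, h₂.vertexSet_subset u h]
  set a : ℝ := (multDU k DU₁ u : ℝ)
  set b : ℝ := (multDU k DU₂ u : ℝ)
  have hsum : (multDU k (DU₁ + DU₂) u : ℝ) = a + b := by simp [a, b, multDU_add]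
  -- each summand is `m * A u + m⁺ * (B u - A u)`, and `m ↦ m⁺` is subadditive
  have hpos : (a + b)⁺ ≤ a⁺ + b⁺ := sup_le (add_le_add (le_posPart a) (le_posPart b))
    (add_nonneg (posPart_nonneg a) (posPart_nonneg b))
  have hneg : ∀ m : ℝ, m⁻ = m⁺ - m := fun m => by linarith [posPart_sub_negPart m]
  rw [hsum, hneg, hneg a, hneg b]
  nlinarith [mul_le_mul_of_nonneg_right hpos (sub_nonneg.2 hAB)]

lemma Lk_nsmul_le {D : Set (Pt n)} {A B : Pt n → ℝ} (hAB : ∀ u ∈ D, A u ≤ B u)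
    {DU : Multiset (Box n)} (h : memRk k D DU) (t : ℕ) :
    Lk k A B (t • DU) ≤ t * Lk k A B DU := by
  induction t with
  | zero => simp [Lk_zero]
  | succ t ih =>
    rw [succ_nsmul]
    calc Lk k A B (t • DU + DU) ≤ Lk k A B (t • DU) + Lk k A B DU := Lk_add_le hAB (h.nsmul t) h
      _ ≤ ((t + 1 : ℕ) : ℝ) * Lk k A B DU := by push_cast; linarith

lemma tendsto_Lk_right {ι : Type*} {l : Filter ι} {A C : Pt n → ℝ} {B : ι → Pt n → ℝ}
    {DU : Multiset (Box n)} (h : ∀ u ∈ vertexSet DU, Filter.Tendsto (B · u) l (nhds (C u))) :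
    Filter.Tendsto (fun i => Lk k A (B i) DU) l (nhds (Lk k A C DU)) := by
  simp only [Lk_eq_sum subset_rfl]
  exact tendsto_finsetSum _ fun u hu => ((h u hu).const_mul _).sub_const _

section Lowering

variable {D : Set (Pt n)} {A B : Pt n → ℝ} {x : Pt n}

lemma Ppos_nonneg (hL : ∀ E, memRk k D E → 0 ≤ Lk k A B E) : 0 ≤ Ppos k D A B x :=
  Real.sInf_nonneg fun _ ⟨E, hE, _, hr⟩ => hr ▸ div_nonneg (hL E hE) (abs_nonneg _)

lemma deltaK_nonneg (hL : ∀ E, memRk k D E → 0 ≤ Lk k A B E) (hx : A x ≤ B x) :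
    0 ≤ deltaK k D A B x :=
  le_min (Ppos_nonneg hL) (sub_nonneg.2 hx)

lemma deltaK_mul_le_Lk (hL : ∀ E, memRk k D E → 0 ≤ Lk k A B E) {E : Multiset (Box n)}
    (hE : memRk k D E) (hm : 0 < multDU k E x) :
    deltaK k D A B x * multDU k E x ≤ Lk k A B E := by
  have hm' : (0 : ℝ) < multDU k E x := by exact_mod_cast hm
  have hP : Ppos k D A B x ≤ Lk k A B E / |(multDU k E x : ℝ)| :=
    csInf_le ⟨0, fun _ ⟨E, hE, _, hr⟩ => hr ▸ div_nonneg (hL E hE) (abs_nonneg _)⟩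
      ⟨E, hE, hm, rfl⟩
  rw [abs_of_pos hm', le_div_iff₀ hm'] at hP
  exact (mul_le_mul_of_nonneg_right (min_le_left _ _) hm'.le).trans hP

lemma deltaK_le_sub : deltaK k D A B x ≤ B x - A x :=
  min_le_right _ _

lemma le_update_sub_deltaK (hAB : ∀ u ∈ D, A u ≤ B u) :
    ∀ u ∈ D, A u ≤ Function.update B x (B x - deltaK k D A B x) u := by
  intro u hu
  rcases eq_or_ne u x with rfl | h
  · rw [Function.update_self]
    linarith [(deltaK_le_sub : deltaK k D A B u ≤ B u - A u)]
  · rw [Function.update_of_ne h]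
    exact hAB u hu

lemma Lk_update_sub_deltaK_nonneg (hL : ∀ E, memRk k D E → 0 ≤ Lk k A B E) :
    ∀ E, memRk k D E → 0 ≤ Lk k A (Function.update B x (B x - deltaK k D A B x)) E := by
  intro E hE
  rw [Lk_update_right, sub_sub_cancel_left]
  rcases lt_or_ge 0 (multDU k E x) with hm | hm
  · have hm' : (0 : ℝ) ≤ multDU k E x := by exact_mod_cast hm.le
    rw [posPart_eq_self.2 hm']
    linarith [deltaK_mul_le_Lk hL hE hm]
  · rw [posPart_eq_zero.2 (by exact_mod_cast hm)]
    simpa using hL E hE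

lemma exists_Lk_lt_deltaK_add_mul (hne : ∃ E, memRk k D E ∧ 0 < multDU k E x)
    (hδ : deltaK k D A B x < B x - A x) {ε : ℝ} (hε : 0 < ε) :
    ∃ E, memRk k D E ∧ 0 < multDU k E x ∧
      Lk k A B E < (deltaK k D A B x + ε) * multDU k E x := by
  have hδP : deltaK k D A B x = Ppos k D A B x :=
    min_eq_left (not_le.1 fun h => hδ.ne (min_eq_right h)).le
  obtain ⟨E₀, hE₀, hm₀⟩ := hne
  have hlt := lt_add_of_pos_right (Ppos k D A B x) hε
  nth_rewrite 1 [Ppos] at hlt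
  obtain ⟨_, ⟨E, hE, hm, rfl⟩, hlt⟩ :=
    exists_lt_of_csInf_lt (by exact ⟨_, E₀, hE₀, hm₀, rfl⟩) hlt
  have hm' : (0 : ℝ) < multDU k E x := by exact_mod_cast hm
  rw [abs_of_pos hm', div_lt_iff₀ hm'] at hlt
  exact ⟨E, hE, hm, hδP ▸ hlt⟩

lemma exists_Lk_le_mul_of_le_update (hne : ∃ E, memRk k D E ∧ 0 < multDU k E x)
    (hxD : x ∈ D) {C : Pt n → ℝ}
    (hCB : ∀ u ∈ D, C u ≤ Function.update B x (B x - deltaK k D A B x) u) (hAC : A x < C x)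
    {ε : ℝ} (hε : 0 < ε) :
    ∃ E, memRk k D E ∧ 0 < multDU k E x ∧ Lk k A C E ≤ ε * multDU k E x := by
  have hCx := hCB x hxD
  rw [Function.update_self] at hCx
  have hδ : deltaK k D A B x < B x - A x := by linarith
  obtain ⟨E, hE, hm, hlt⟩ := exists_Lk_lt_deltaK_add_mul hne hδ hε
  refine ⟨E, hE, hm, ?_⟩
  have hm' : (0 : ℝ) ≤ multDU k E x := by exact_mod_cast hm.le
  calc Lk k A C E ≤ Lk k A (Function.update B x (B x - deltaK k D A B x)) E :=
        Lk_mono (fun _ _ => le_rfl) fun u hu => hCB u (hE.vertexSet_subset u hu)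
    _ = Lk k A B E - deltaK k D A B x * multDU k E x := by
        rw [Lk_update_right, posPart_eq_self.2 hm']; ring
    _ ≤ ε * multDU k E x := by linarith

end Lowering

section LoweringSequence

variable {D : Set (Pt n)} {A B : Pt n → ℝ} {d : ℕ → Pt n} {Bs : ℕ → Pt n → ℝ}

lemma lowering_invariant (hAB : ∀ u ∈ D, A u ≤ B u) (hL : ∀ E, memRk k D E → 0 ≤ Lk k A B E)
    (hBs0 : Bs 0 = B)
    (hstep : ∀ i, Bs (i + 1) =
      Function.update (Bs i) (d i) (Bs i (d i) - deltaK k D A (Bs i) (d i))) (i : ℕ) :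
    (∀ u ∈ D, A u ≤ Bs i u) ∧ ∀ E, memRk k D E → 0 ≤ Lk k A (Bs i) E := by
  induction i with
  | zero => exact hBs0 ▸ ⟨hAB, hL⟩
  | succ i ih =>
    rw [hstep]
    exact ⟨le_update_sub_deltaK ih.1, Lk_update_sub_deltaK_nonneg ih.2⟩

lemma lowering_antitone (hAB : ∀ u ∈ D, A u ≤ B u) (hL : ∀ E, memRk k D E → 0 ≤ Lk k A B E)
    (hBs0 : Bs 0 = B)
    (hstep : ∀ i, Bs (i + 1) =
      Function.update (Bs i) (d i) (Bs i (d i) - deltaK k D A (Bs i) (d i)))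
    {u : Pt n} (hu : u ∈ D) : Antitone (Bs · u) := by
  refine antitone_nat_of_succ_le fun j => ?_
  have hinv := lowering_invariant hAB hL hBs0 hstep j
  rw [hstep, Function.update_apply]
  split_ifs with h
  · subst h
    linarith [deltaK_nonneg hinv.2 (hinv.1 _ hu)]
  · exact le_rfl

end LoweringSequence

section Raising

variable {D : Set (Pt n)} {A C : Pt n → ℝ}

lemma Lk_update_left_nonneg {x : Pt n} (hAC : ∀ u ∈ D, A u ≤ C u)
    (hL : ∀ E, memRk k D E → 0 ≤ Lk k A C E)
    (happrox : x ∈ D → A x < C x → ∀ ε > 0,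
      ∃ E, memRk k D E ∧ 0 < multDU k E x ∧ Lk k A C E ≤ ε * multDU k E x)
    {DU : Multiset (Box n)} (hDU : memRk k D DU) :
    0 ≤ Lk k (Function.update A x (C x)) C DU := by
  set A' := Function.update A x (C x)
  have hA'C : ∀ u ∈ D, A' u ≤ C u := by
    intro u hu
    rcases eq_or_ne u x with rfl | h
    · simp [A']
    · simpa [A', Function.update_of_ne h] using hAC u hu
  have hLA' : ∀ E, Lk k A' C E = Lk k A C E - (multDU k E x : ℝ)⁻ * (C x - A x) :=
    fun E => Lk_update_left A C E x (C x)
  by_cases htriv : (multDU k DU x : ℝ)⁻ * (C x - A x) ≤ 0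
  · rw [hLA']
    linarith [hL DU hDU]
  obtain ⟨hneg, hAx⟩ : 0 < (multDU k DU x : ℝ)⁻ ∧ 0 < C x - A x :=
    (pos_and_pos_or_neg_and_neg_of_mul_pos (not_le.1 htriv)).resolve_right
      fun h => (negPart_nonneg _).not_gt h.1
  have hm : multDU k DU x < 0 := by exact_mod_cast negPart_pos_iff.1 hneg
  have hxD : x ∈ D :=
    hDU.vertexSet_subset x (by_contra fun h => hm.ne (multDU_eq_zero_of_notMem h))
  obtain ⟨q, hq⟩ := Int.eq_ofNat_of_zero_le (neg_nonneg.2 hm.le)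
  have hq0 : (0 : ℝ) < q := by exact_mod_cast (by omega : 0 < q)
  refine le_of_forall_pos_le_add fun ε hε => ?_
  obtain ⟨E, hE, hp, hLE⟩ := happrox hxD (by linarith) (ε / q) (by positivity)
  obtain ⟨p, hpE⟩ := Int.eq_ofNat_of_zero_le hp.le
  have hp0 : (0 : ℝ) < p := by exact_mod_cast (hpE ▸ hp : (0 : ℤ) < p)
  rw [hpE, Int.cast_natCast] at hLE
  -- `p` copies of `DU` and `q` copies of `E` cancel at `x`, where `A'` and `A` differ
  have hcancel : multDU k (p • DU + q • E) x = 0 := by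
    rw [multDU_add, multDU_nsmul, multDU_nsmul, hpE]
    linear_combination (-(p : ℤ)) * hq
  have hA'E : Lk k A' C E ≤ Lk k A C E := by
    rw [hLA']
    exact sub_le_self _ (mul_nonneg (negPart_nonneg _) hAx.le)
  have key : 0 ≤ (p : ℝ) * (Lk k A' C DU + ε) := calc
    0 ≤ Lk k A C (p • DU + q • E) := hL _ ((hDU.nsmul p).add (hE.nsmul q))
    _ = Lk k A' C (p • DU + q • E) := by rw [hLA', hcancel]; simp
    _ ≤ Lk k A' C (p • DU) + Lk k A' C (q • E) := Lk_add_le hA'C (hDU.nsmul p) (hE.nsmul q)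
    _ ≤ p * Lk k A' C DU + q * Lk k A C E := add_le_add (Lk_nsmul_le hA'C hDU p)
        ((Lk_nsmul_le hA'C hE q).trans (mul_le_mul_of_nonneg_left hA'E q.cast_nonneg))
    _ ≤ p * Lk k A' C DU + q * (ε / q * p) := by gcongr
    _ = p * (Lk k A' C DU + ε) := by field_simp
  exact (mul_nonneg_iff_of_pos_left hp0).1 key

theorem Lk_self_nonneg (hAC : ∀ u ∈ D, A u ≤ C u) (hL : ∀ E, memRk k D E → 0 ≤ Lk k A C E)
    (happrox : ∀ x ∈ D, A x < C x → ∀ ε > 0,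
      ∃ E, memRk k D E ∧ 0 < multDU k E x ∧ Lk k A C E ≤ ε * multDU k E x)
    {DU : Multiset (Box n)} (hDU : memRk k D DU) : 0 ≤ Lk k C C DU := by
  have key : ∀ N : Finset (Pt n), ∀ E, memRk k D E → 0 ≤ Lk k (N.piecewise C A) C E := by
    intro N
    induction N using Finset.induction_on with
    | empty => simpa using hL
    | insert x N hx ih =>
      have hAA' : ∀ u ∈ D, A u ≤ N.piecewise C A u := fun u hu => by
        by_cases h : u ∈ N <;> simp [h, hAC u hu]
      rw [Finset.piecewise_insert]
      refine fun E hE => Lk_update_left_nonneg (fun u hu => ?_) ih (fun hxD hxC ε hε => ?_) hE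
      · by_cases h : u ∈ N <;> simp [h, hAC u hu]
      rw [Finset.piecewise_eq_of_notMem _ _ _ hx] at hxC
      obtain ⟨E, hE, hm, hLE⟩ := happrox x hxD hxC ε hε
      exact ⟨E, hE, hm, (Lk_mono (fun u hu => hAA' u (hE.vertexSet_subset u hu))
        fun _ _ => le_rfl).trans hLE⟩
  calc 0 ≤ Lk k ((vertexSet DU).piecewise C A) C DU := key _ DU hDU
    _ = Lk k C C DU := by
      rw [Lk_eq_sum subset_rfl, Lk_eq_sum subset_rfl]
      exact Finset.sum_congr rfl fun u hu => by rw [Finset.piecewise_eq_of_mem _ _ _ hu]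

end Raising

def cornerBox (x : Pt n) (K S : Finset (Fin n)) : Box n where
  lo i := if i ∈ K \ S then 0 else x i
  hi i := if i ∈ S then 1 else x i

section CornerBox

open Finset

variable {x : Pt n} {K S : Finset (Fin n)}

lemma cornerBox_vertex_coord {v : Pt n} (hv : v ∈ (cornerBox x K S).vertices) (i : Fin n) :
    v i = 0 ∨ v i = x i ∨ v i = 1 := by
  rcases Box.mem_vertices.1 hv i with h | h <;> simp only [cornerBox] at h <;> split_ifs at h <;>
    simp [h]

lemma cornerBox_isKBox (hx : inCube x) (hSK : S ⊆ K) (hS : ∀ i ∈ S, x i < 1)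
    (hKS : ∀ i ∈ K \ S, 0 < x i) : (cornerBox x K S).IsKBox #K := by
  have hcoord : ∀ i, (cornerBox x K S).lo i ≤ (cornerBox x K S).hi i ∧
      ((cornerBox x K S).lo i < (cornerBox x K S).hi i ↔ i ∈ K) := by
    intro i
    simp only [cornerBox]
    by_cases hiS : i ∈ S
    · have hiK := hSK hiS
      simp [hiS, hiK, (hS i hiS).le, hS i hiS]
    by_cases hiK : i ∈ K
    · have := hKS i (Finset.mem_sdiff.2 ⟨hiK, hiS⟩)
      simp [hiS, hiK, this.le, this]
    · simp [hiS, hiK]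
  refine ⟨fun i => ?_, fun i => ?_, fun i => (hcoord i).1, ?_⟩
  · simp only [cornerBox]; split_ifs <;> simp [hx i]
  · simp only [cornerBox]; split_ifs <;> simp [hx i]
  · congr 1
    ext i
    simp [(hcoord i).2]

lemma cornerBox_mult_self (hSK : S ⊆ K) (hKS : ∀ i ∈ K \ S, 0 < x i) (hKn : #K ≤ n) :
    (cornerBox x K S).mult #K x = (-1) ^ #S := by
  have hvert : (cornerBox x K S).IsVertex x := by
    intro i
    simp only [cornerBox]
    by_cases h : i ∈ K \ S
    · simp [h, (Finset.mem_sdiff.1 h).2]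
    · simp [h]
  have hlo : Finset.univ.filter (fun i => x i = (cornerBox x K S).lo i) = (K \ S)ᶜ := by
    ext i
    rw [Finset.mem_filter, Finset.mem_compl]
    by_cases h : i ∈ K \ S
    · have hloi : (cornerBox x K S).lo i = 0 := if_pos h
      simp [hloi, h, (hKS i h).ne']
    · have hloi : (cornerBox x K S).lo i = x i := if_neg h
      simp [hloi, h]
  have hcard : #(K \ S)ᶜ + (n - #K) = #S + 2 * (n - #K) := by
    rw [Finset.card_compl, Fintype.card_fin, Finset.card_sdiff_of_subset hSK]
    have := Finset.card_le_card hSK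
    omega
  rw [Box.mult, if_pos hvert, Box.sign, hlo, hcard, pow_add, pow_mul, neg_one_sq, one_pow,
    mul_one]

lemma exists_kBox_mult_eq_one (hk1 : 1 ≤ k) (hkn : k ≤ n) {x : Pt n} (hx : inCube x)
    {i₀ : Fin n} (h0 : 0 < x i₀) (h1 : x i₀ < 1) :
    ∃ R : Box n, R.IsKBox k ∧ R.mult k x = 1 ∧
      ∀ v ∈ R.vertices, ∀ i, v i = 0 ∨ v i = x i ∨ v i = 1 := by
  obtain ⟨K, hi₀K, -, rfl⟩ := Finset.exists_subsuperset_card_eq (Finset.subset_univ {i₀})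
    (by simpa using hk1) (by simpa using hkn)
  have hi₀K : i₀ ∈ K := hi₀K (Finset.mem_singleton_self i₀)
  set L := K.filter (x · < 1)
  -- `x` sits at the lower end of the coordinates in `S`; toggling `i₀` fixes the parity of `#S`
  set S := if Even #L then L else L.erase i₀
  have hSL : S ⊆ L := by
    by_cases h : Even #L
    · simp [S, h]
    · simpa [S, h] using Finset.erase_subset i₀ L
  have hS : Even #S := by
    by_cases h : Even #L
    · simp [S, h]
    · have hi₀L : i₀ ∈ L := Finset.mem_filter.2 ⟨hi₀K, h1⟩
      simp only [S, h, if_false, Finset.card_erase_of_mem hi₀L]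
      exact Nat.Odd.sub_odd (Nat.not_even_iff_odd.1 h) odd_one
  have hSK : S ⊆ K := hSL.trans (Finset.filter_subset _ _)
  have hKS : ∀ i ∈ K \ S, 0 < x i := by
    intro i hi
    obtain ⟨hiK, hiS⟩ := Finset.mem_sdiff.1 hi
    by_cases hii₀ : i = i₀
    · exact hii₀ ▸ h0
    have hiL : i ∉ L := fun hiL => hiS (by
      by_cases h : Even #L
      · simpa [S, h] using hiL
      · simpa [S, h, hii₀] using hiL)
    have : ¬ x i < 1 := fun hlt => hiL (Finset.mem_filter.2 ⟨hiK, hlt⟩)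
    linarith
  refine ⟨cornerBox x K S,
    cornerBox_isKBox hx hSK (fun i hi => (Finset.mem_filter.1 (hSL hi)).2) hKS, ?_,
    fun v hv => cornerBox_vertex_coord hv⟩
  rw [cornerBox_mult_self hSK hKS (by simpa using hkn), hS.neg_one_pow]

end CornerBox

lemma IsMesh.inCube {D : Set (Pt n)} (hD : IsMesh D) {x : Pt n} (hx : x ∈ D) : inCube x := by
  obtain ⟨δ, hδ, rfl⟩ := hD
  exact fun i => (hδ i).1 (hx i)

lemma IsMesh.mem_of_coord {D : Set (Pt n)} (hD : IsMesh D) {x v : Pt n} (hx : x ∈ D)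
    (hv : ∀ i, v i = 0 ∨ v i = x i ∨ v i = 1) : v ∈ D := by
  obtain ⟨δ, hδ, rfl⟩ := hD
  intro i
  rcases hv i with h | h | h <;> rw [h]
  exacts [(hδ i).2.2.2.2.1, hx i, (hδ i).2.2.2.2.2]

lemma exists_memRk_multDU_pos (hk1 : 1 ≤ k) (hkn : k ≤ n) {D : Set (Pt n)} (hD : IsMesh D)
    {x : Pt n} (hx : x ∈ D) (hxv : ¬ isCubeVertex x) :
    ∃ E, memRk k D E ∧ 0 < multDU k E x := by
  have hxI := hD.inCube hx
  obtain ⟨i₀, h0, h1⟩ : ∃ i, 0 < x i ∧ x i < 1 := by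
    by_contra! h
    refine hxv fun i => ?_
    rcases (hxI i).1.eq_or_lt with h0 | h0
    · exact Or.inl h0.symm
    · exact Or.inr (le_antisymm (hxI i).2 (h i h0))
  obtain ⟨R, hR, hRx, hRv⟩ := exists_kBox_mult_eq_one hk1 hkn hxI h0 h1
  refine ⟨{R}, fun R' hR' => ?_, by simp [multDU, hRx]⟩
  rw [Multiset.mem_singleton.1 hR']
  exact ⟨hR, fun v hv => hD.mem_of_coord hx (hRv v hv)⟩

end KIncr

open KIncr

theorem stmt14_general (n k : ℕ) (hk1 : 1 ≤ k) (hkn : k ≤ n)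
    (D : Set (Pt n)) (hD : IsMesh D)
    (d : ℕ → Pt n) (hdrange : Set.range d = D)
    (A B : Pt n → ℝ)
    (hAB : ∀ u ∈ D, A u ≤ B u)
    (hL : ∀ DU : Multiset (Box n), memRk k D DU → 0 ≤ Lk k A B DU)
    (hvert : ∀ w : Pt n, isCubeVertex w → A w = B w)
    (Bs : ℕ → Pt n → ℝ) (hBs0 : Bs 0 = B)
    (hBsSucc : ∀ i : ℕ, ∀ u : Pt n,
      Bs (i + 1) u = if u = d i then Bs i u - deltaK k D A (Bs i) (d i) else Bs i u)
    (C : Pt n → ℝ)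
    (hC : ∀ u ∈ D, Filter.Tendsto (fun i => Bs i u) Filter.atTop (nhds (C u))) :
    ∀ DU : Multiset (Box n), memRk k D DU → 0 ≤ Lk k C C DU := by
  have hstep : ∀ i, Bs (i + 1) =
      Function.update (Bs i) (d i) (Bs i (d i) - deltaK k D A (Bs i) (d i)) :=
    fun i => funext fun u => by
      rw [hBsSucc, Function.update_apply]
      split_ifs with h <;> simp [h]
  have hinv := lowering_invariant hAB hL hBs0 hstep
  have hCle : ∀ i, ∀ u ∈ D, C u ≤ Bs i u := fun i u hu =>
    (lowering_antitone hAB hL hBs0 hstep hu).le_of_tendsto (hC u hu) i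
  have hAC : ∀ u ∈ D, A u ≤ C u := fun u hu => ge_of_tendsto' (hC u hu) fun i => (hinv i).1 u hu
  refine fun DU hDU => Lk_self_nonneg hAC (fun E hE => ge_of_tendsto'
    (tendsto_Lk_right fun u hu => hC u (hE.vertexSet_subset u hu)) fun i => (hinv i).2 E hE)
    (fun x hx hAxC ε hε => ?_) hDU
  obtain ⟨j, rfl⟩ : x ∈ Set.range d := hdrange ▸ hx
  have hxv : ¬ isCubeVertex (d j) := fun hv => by
    have := hCle 0 _ hx
    rw [hBs0] at this
    linarith [hvert _ hv]
  exact exists_Lk_le_mul_of_le_update (exists_memRk_multDU_pos hk1 hkn hD hx hxv) hx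
    (hstep j ▸ hCle (j + 1)) hAxC hε

/-- Proposition 5.5: the pointwise limit `C` of the sequence
obtained by lowering `B` is `k`-increasing on the mesh. -/
theorem stmt14 (n k : ℕ) (hn : 1 ≤ n) (hk1 : 1 ≤ k) (hkn : k ≤ n)
    (D : Set (Pt n)) (hD : IsMesh D)
    (d : ℕ → Pt n) (hdinj : Function.Injective d) (hdrange : Set.range d = D)
    (A B : Pt n → ℝ)
    (hAI : ∀ u ∈ D, A u ∈ Set.Icc (0:ℝ) 1) (hBI : ∀ u ∈ D, B u ∈ Set.Icc (0:ℝ) 1)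
    (hAB : ∀ u ∈ D, A u ≤ B u)
    (hL : ∀ DU : Multiset (Box n), memRk k D DU → 0 ≤ Lk k A B DU)
    (hvert : ∀ w : Pt n, isCubeVertex w → A w = B w)
    (Bs : ℕ → Pt n → ℝ) (hBs0 : Bs 0 = B)
    (hBsSucc : ∀ i : ℕ, ∀ u : Pt n,
      Bs (i + 1) u = if u = d i then Bs i u - deltaK k D A (Bs i) (d i) else Bs i u)
    (C : Pt n → ℝ)
    (hC : ∀ u ∈ D, Filter.Tendsto (fun i => Bs i u) Filter.atTop (nhds (C u))) :
    ∀ DU : Multiset (Box n), memRk k D DU → 0 ≤ Lk k C C DU :=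
  stmt14_general n k hk1 hkn D hD d hdrange A B hAB hL hvert Bs hBs0 hBsSucc C hC
end

section
/- Let A, B : I^n → I be standardized functions with A ≤ B and fix an integer k with 1 ≤ k ≤ n. Suppose at least one of the functions A and B satisfies Condition S with a countable set S ⊆ [0,1]. Let D = ∏_{i=1}^n δ_i ⊆ I^n be a dense countably infinite mesh with S ⊆ δ_i for each i (so S^n ⊆ D), and let C : D → I be a k-increasing function on D such that A(d) ≤ C(d) ≤ B(d) for all d ∈ D. Then there exists a k-increasing function Ĉ : I^n → I such that Ĉ(d) = C(d) for all d ∈ D and A(x) ≤ Ĉ(x) ≤ B(x) for all x ∈ I^n. -/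
set_option maxHeartbeats 1000000


open scoped Classical BigOperators

/-! ### Auxiliary lemmas for the proof of stmt15 -/

namespace StmtAux
open Filter Finset KIncr

variable {n k : ℕ}

/-- The vertex of `R` selected by a sign pattern `ε`. -/
def vtx (R : Box n) (ε : Fin n → Bool) : Pt n := fun i => if ε i then R.hi i else R.lo i

lemma mem_vertices_iff {R : Box n} {v : Pt n} : v ∈ R.vertices ↔ ∃ ε, vtx R ε = v := by
  simp only [Box.vertices, Finset.mem_image, Finset.mem_univ, true_and]
  exact Iff.rfl

lemma vtx_coord_mem (R : Box n) (ε : Fin n → Bool) (i : Fin n) :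
    vtx R ε i = R.lo i ∨ vtx R ε i = R.hi i := by
  unfold vtx; by_cases h : ε i <;> simp [h]

lemma filter_vtx_eq_lo (R : Box n) (hle : ∀ i, R.lo i ≤ R.hi i) (ε : Fin n → Bool) :
    (Finset.univ.filter (fun i => vtx R ε i = R.lo i)) =
      (Finset.univ.filter (fun i => ε i = false ∨ ¬ R.lo i < R.hi i)) := by
  apply Finset.filter_congr
  intro i _
  unfold vtx
  constructor
  · intro h
    by_cases hb : ε i
    · simp only [hb, if_true] at h
      right
      intro hlt
      rw [h] at hlt
      exact lt_irrefl _ hlt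
    · left; simpa using hb
  · intro h
    rcases h with h | h
    · simp [h]
    · have : R.lo i = R.hi i := le_antisymm (hle i) (not_lt.mp h)
      by_cases hb : ε i <;> simp [hb, this]

lemma sign_vtx (R : Box n) (hle : ∀ i, R.lo i ≤ R.hi i) (ε : Fin n → Bool) :
    R.sign k (vtx R ε) =
      (-1) ^ ((Finset.univ.filter (fun i => ε i = false ∨ ¬ R.lo i < R.hi i)).card + (n - k)) := by
  unfold Box.sign
  rw [filter_vtx_eq_lo R hle ε]

/-- Fiber counting: each vertex of a `k`-box comes from `2^(n-k)` sign patterns. -/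
lemma fiber_card (R : Box n) (hle : ∀ i, R.lo i ≤ R.hi i)
    (hcard : (Finset.univ.filter (fun i => R.lo i < R.hi i)).card = k)
    (ε0 : Fin n → Bool) :
    (Finset.univ.filter (fun ε : Fin n → Bool => vtx R ε = vtx R ε0)).card = 2 ^ (n - k) := by
  have hset : (Finset.univ.filter (fun ε : Fin n → Bool => vtx R ε = vtx R ε0)) =
      Fintype.piFinset (fun i => Finset.univ.filter
        (fun b : Bool => (if b then R.hi i else R.lo i) = vtx R ε0 i)) := by
    ext ε
    simp only [Finset.mem_filter, Finset.mem_univ, true_and, Fintype.mem_piFinset]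
    constructor
    · intro h i; exact congrFun h i
    · intro h; funext i; exact h i
  rw [hset, Fintype.card_piFinset]
  have hfac : ∀ i : Fin n, (Finset.univ.filter
      (fun b : Bool => (if b then R.hi i else R.lo i) = vtx R ε0 i)).card =
      (if R.lo i < R.hi i then 1 else 2) := by
    intro i
    rw [Finset.card_filter]
    rw [Fintype.sum_bool]
    by_cases hlt : R.lo i < R.hi i
    · rcases vtx_coord_mem R ε0 i with h | h
      · rw [h]
        simp [hlt, hlt.ne', hlt.ne]
      · rw [h]
        simp [hlt, hlt.ne', hlt.ne]
    · have heq : R.lo i = R.hi i := le_antisymm (hle i) (not_lt.mp hlt)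
      rcases vtx_coord_mem R ε0 i with h | h <;> rw [h] <;> simp [hlt, heq]
  calc ∏ i : Fin n, (Finset.univ.filter
      (fun b : Bool => (if b then R.hi i else R.lo i) = vtx R ε0 i)).card
      = ∏ i : Fin n, (if R.lo i < R.hi i then 1 else 2) := by
        exact Finset.prod_congr rfl (fun i _ => hfac i)
    _ = 2 ^ (n - k) := by
        rw [← Finset.prod_filter_mul_prod_filter_not Finset.univ (fun i => R.lo i < R.hi i)]
        have h1 : (∏ x ∈ Finset.univ.filter (fun x => R.lo x < R.hi x),
            (if R.lo x < R.hi x then 1 else 2)) = 1 := by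
          apply Finset.prod_eq_one
          intro x hx
          simp [(Finset.mem_filter.mp hx).2]
        have h2 : (∏ x ∈ Finset.univ.filter (fun x => ¬ R.lo x < R.hi x),
            (if R.lo x < R.hi x then 1 else 2)) = 2 ^ (n - k) := by
          rw [Finset.prod_congr rfl (fun x hx => by
            simp [(Finset.mem_filter.mp hx).2] : ∀ x ∈ Finset.univ.filter (fun x => ¬ R.lo x < R.hi x),
              (if R.lo x < R.hi x then 1 else 2) = 2)]
          rw [Finset.prod_const]
          congr 1
          have := Finset.card_filter_add_card_filter_not
            (s := (Finset.univ : Finset (Fin n))) (fun i => R.lo i < R.hi i)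
          rw [hcard] at this
          simp only [Finset.card_univ, Fintype.card_fin] at this
          omega
        rw [h1, h2, one_mul]

/-- Sum over sign patterns equals `2^(n-k)` times the sum over vertices. -/
lemma sum_eps (R : Box n) (hle : ∀ i, R.lo i ≤ R.hi i)
    (hcard : (Finset.univ.filter (fun i => R.lo i < R.hi i)).card = k)
    (g : Pt n → ℝ) :
    ∑ ε : Fin n → Bool, g (vtx R ε) = 2 ^ (n - k) * ∑ v ∈ R.vertices, g v := by
  rw [Finset.sum_comp g (fun ε : Fin n → Bool => vtx R ε)]
  have himg : Finset.image (fun ε : Fin n → Bool => vtx R ε) Finset.univ = R.vertices := rfl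
  rw [himg, Finset.mul_sum]
  apply Finset.sum_congr rfl
  intro v hv
  rcases mem_vertices_iff.mp hv with ⟨ε0, rfl⟩
  rw [fiber_card R hle hcard ε0]
  simp [mul_comm]

/-- Parity helper: flipping a predicate at one point flips the sign. -/
lemma parity_filter_flip (p q : Fin n → Prop) [DecidablePred p] [DecidablePred q] (j : Fin n)
    (hsame : ∀ i, i ≠ j → (p i ↔ q i)) (hflip : p j ↔ ¬ q j) (c : ℕ) :
    ((-1 : ℤ) ^ ((Finset.univ.filter p).card + c)) =
      - ((-1 : ℤ) ^ ((Finset.univ.filter q).card + c)) := by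
  have hp : (Finset.univ.filter p).card
      = (∑ i ∈ Finset.univ.erase j, if p i then 1 else 0) + (if p j then 1 else 0) := by
    rw [Finset.card_filter]
    rw [← Finset.sum_erase_add Finset.univ _ (Finset.mem_univ j)]
  have hq : (Finset.univ.filter q).card
      = (∑ i ∈ Finset.univ.erase j, if q i then 1 else 0) + (if q j then 1 else 0) := by
    rw [Finset.card_filter]
    rw [← Finset.sum_erase_add Finset.univ _ (Finset.mem_univ j)]
  have hsum : (∑ i ∈ Finset.univ.erase j, if p i then 1 else 0)
      = (∑ i ∈ Finset.univ.erase j, if q i then 1 else 0) := by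
    apply Finset.sum_congr rfl
    intro i hi
    have := hsame i (Finset.ne_of_mem_erase hi)
    by_cases h : p i
    · simp [h, this.mp h]
    · have hq2 : ¬ q i := fun hq' => h (this.mpr hq')
      simp [h, hq2]
  rw [hp, hq, hsum]
  by_cases h : q j
  · have : ¬ p j := fun hp' => (hflip.mp hp') h
    simp only [h, this, if_true, if_false]
    rw [pow_add, pow_add, pow_add]
    ring
  · have : p j := hflip.mpr h
    simp only [h, this, if_true, if_false]
    rw [pow_add, pow_add, pow_add]
    ring

/-- Cancellation: if `g` does not distinguish the two sides of a nondegenerate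
coordinate `j`, then the signed sum vanishes. -/
lemma sum_eps_zero (R : Box n) (hle : ∀ i, R.lo i ≤ R.hi i) (j : Fin n)
    (hj : R.lo j < R.hi j) (g : Pt n → ℝ)
    (hg : ∀ ε : Fin n → Bool, g (vtx R (Function.update ε j (!ε j))) = g (vtx R ε)) :
    ∑ ε : Fin n → Bool, (R.sign k (vtx R ε) : ℝ) * g (vtx R ε) = 0 := by
  set flip : (Fin n → Bool) → (Fin n → Bool) := fun ε => Function.update ε j (!ε j) with hflipdef
  have hinv : Function.Involutive flip := by
    intro ε
    funext i
    rcases eq_or_ne i j with rfl | h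
    · simp [flip, Function.update_self]
    · simp [flip, Function.update_of_ne h]
  have hsign : ∀ ε : Fin n → Bool,
      (R.sign k (vtx R (flip ε)) : ℤ) = - R.sign k (vtx R ε) := by
    intro ε
    rw [sign_vtx R hle, sign_vtx R hle]
    refine parity_filter_flip _ _ j ?_ ?_ _
    · intro i hi
      simp [flip, Function.update_of_ne hi]
    · cases hb : ε j <;>
        simp [flip, Function.update_self, hb, hj, not_lt.mpr (le_of_lt hj)]
  set F : (Fin n → Bool) → ℝ := fun ε => (R.sign k (vtx R ε) : ℝ) * g (vtx R ε) with hF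
  have hsum : ∑ ε : Fin n → Bool, F ε = ∑ ε : Fin n → Bool, F (flip ε) :=
    (Fintype.sum_bijective flip hinv.bijective (fun ε => F (flip ε)) F (fun ε => rfl)).symm
  have hzero : ∀ ε : Fin n → Bool, F ε + F (flip ε) = 0 := by
    intro ε
    have h1 : F (flip ε) = -(R.sign k (vtx R ε) : ℝ) * g (vtx R ε) := by
      simp only [F]
      rw [hg ε]
      have : ((R.sign k (vtx R (flip ε)) : ℤ) : ℝ) = -((R.sign k (vtx R ε) : ℤ) : ℝ) := by
        rw [hsign ε]; push_cast; ring
      rw [this]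
    simp only [F] at h1 ⊢
    rw [h1]; ring
  have h2 : (2 : ℝ) * ∑ ε : Fin n → Bool, F ε = 0 := by
    have := Finset.sum_add_distrib (s := (Finset.univ : Finset (Fin n → Bool)))
      (f := F) (g := fun ε => F (flip ε))
    calc (2:ℝ) * ∑ ε : Fin n → Bool, F ε
        = (∑ ε : Fin n → Bool, F ε) + ∑ ε : Fin n → Bool, F (flip ε) := by
          rw [← hsum]; ring
      _ = ∑ ε : Fin n → Bool, (F ε + F (flip ε)) := this.symm
      _ = 0 := by
          rw [Finset.sum_congr rfl (fun ε _ => hzero ε)]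
          simp
  have := mul_eq_zero.mp h2
  rcases this with h | h
  · norm_num at h
  · exact h

/-- The key per-stage inequality: snapping a `k`-box coordinatewise into the
mesh preserves nonnegativity of the signed sum. -/
lemma snap_vvol_nonneg
    (δ : Fin n → Set ℝ) (hδsub : ∀ i, δ i ⊆ Set.Icc (0:ℝ) 1)
    (D : Set (Pt n)) (hDdef : D = {x : Pt n | ∀ i, x i ∈ δ i})
    (C : Pt n → ℝ) (hCincr : KIncreasingOn k D C)
    (σ : Fin n → ℝ → ℝ) (hσm : ∀ i, Monotone (σ i))
    (hσd : ∀ i, ∀ t ∈ Set.Icc (0:ℝ) 1, σ i t ∈ δ i)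
    (R : Box n) (hR : R.IsKBox k) :
    0 ≤ ∑ v ∈ R.vertices, (R.sign k v : ℝ) * C (fun i => σ i (v i)) := by
  obtain ⟨hlo, hhi, hle, hcard⟩ := hR
  set R' : Box n := ⟨fun i => σ i (R.lo i), fun i => σ i (R.hi i)⟩ with hR'
  have hle' : ∀ i, R'.lo i ≤ R'.hi i := fun i => hσm i (hle i)
  have hsnapvtx : ∀ ε : Fin n → Bool, (fun i => σ i (vtx R ε i)) = vtx R' ε := by
    intro ε
    funext i
    by_cases h : ε i <;> simp [vtx, h, hR']
  have hkey : 0 ≤ ∑ ε : Fin n → Bool, (R.sign k (vtx R ε) : ℝ) * C (fun i => σ i (vtx R ε i)) := by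
    by_cases hcase : ∀ i, R.lo i < R.hi i → R'.lo i < R'.hi i
    · -- no collapse: the snapped box is a k-box with vertices in D
      have hiff : ∀ i, (R.lo i < R.hi i ↔ R'.lo i < R'.hi i) := by
        intro i
        constructor
        · exact hcase i
        · intro h
          by_contra hc
          have : R.lo i = R.hi i := le_antisymm (hle i) (not_lt.mp hc)
          simp only [hR'] at h
          rw [this] at h
          exact lt_irrefl _ h
      have hfilter : (Finset.univ.filter (fun i => R'.lo i < R'.hi i))
          = (Finset.univ.filter (fun i => R.lo i < R.hi i)) := by
        apply Finset.filter_congr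
        intro i _
        exact (hiff i).symm
      have hcard' : (Finset.univ.filter (fun i => R'.lo i < R'.hi i)).card = k := by
        rw [hfilter]; exact hcard
      have hsign' : ∀ ε : Fin n → Bool, R.sign k (vtx R ε) = R'.sign k (vtx R' ε) := by
        intro ε
        have hfe : (Finset.univ.filter (fun i => ε i = false ∨ ¬ R.lo i < R.hi i))
            = (Finset.univ.filter (fun i => ε i = false ∨ ¬ R'.lo i < R'.hi i)) := by
          apply Finset.filter_congr
          intro i _
          exact or_congr Iff.rfl (not_congr (hiff i))
        rw [sign_vtx R hle, sign_vtx R' hle', hfe]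
      have heq : ∑ ε : Fin n → Bool, (R.sign k (vtx R ε) : ℝ) * C (fun i => σ i (vtx R ε i))
          = ∑ ε : Fin n → Bool, (R'.sign k (vtx R' ε) : ℝ) * C (vtx R' ε) := by
        apply Finset.sum_congr rfl
        intro ε _
        rw [hsign' ε, hsnapvtx ε]
      rw [heq]
      have hsum' := sum_eps (k := k) R' hle' hcard' (fun v => (R'.sign k v : ℝ) * C v)
      rw [hsum']
      apply mul_nonneg (by positivity)
      -- this is Vvol k C R'
      have hbox' : R'.IsKBox k := by
        refine ⟨?_, ?_, hle', hcard'⟩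
        · intro i
          exact hδsub i (hσd i (R.lo i) (hlo i))
        · intro i
          exact hδsub i (hσd i (R.hi i) (hhi i))
      have hvD : ∀ v ∈ R'.vertices, v ∈ D := by
        intro v hv
        rcases mem_vertices_iff.mp hv with ⟨ε, rfl⟩
        rw [hDdef]
        intro i
        rcases vtx_coord_mem R' ε i with h | h
        · rw [h]; exact hσd i (R.lo i) (hlo i)
        · rw [h]; exact hσd i (R.hi i) (hhi i)
      exact hCincr R' hbox' hvD
    · -- collapse: the signed sum is zero
      push_neg at hcase
      obtain ⟨j, hj, hj'⟩ := hcase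
      have hcol : σ j (R.lo j) = σ j (R.hi j) :=
        le_antisymm (hσm j (hle j)) hj'
      have hg : ∀ ε : Fin n → Bool,
          (fun v => C (fun i => σ i (v i))) (vtx R (Function.update ε j (!ε j)))
            = (fun v => C (fun i => σ i (v i))) (vtx R ε) := by
        intro ε
        simp only []
        congr 1
        funext i
        rcases eq_or_ne i j with rfl | h
        · rcases vtx_coord_mem R ε i with h' | h' <;>
            rcases vtx_coord_mem R (Function.update ε i (!ε i)) i with h'' | h'' <;>
            rw [h', h''] <;> simp [hcol]
        · unfold vtx
          rw [Function.update_of_ne h]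
      have := sum_eps_zero (k := k) R hle j hj (fun v => C (fun i => σ i (v i))) hg
      rw [this]
  have hconv := sum_eps (k := k) R hle hcard (fun v => (R.sign k v : ℝ) * C (fun i => σ i (v i)))
  rw [hconv] at hkey
  have h2pos : (0:ℝ) < 2 ^ (n - k) := by positivity
  nlinarith [hkey]

/-! ### Snapping functions into a dense countable subset -/

lemma exists_lower_snap (δ : Set ℝ) (hsub : δ ⊆ Set.Icc (0:ℝ) 1) (hcnt : δ.Countable)
    (hdense : Set.Icc (0:ℝ) 1 ⊆ closure δ) (h0 : (0:ℝ) ∈ δ) :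
    ∃ σ : ℕ → ℝ → ℝ, (∀ m, Monotone (σ m)) ∧ (∀ m, ∀ t ∈ Set.Icc (0:ℝ) 1, σ m t ∈ δ) ∧
      (∀ m, ∀ t ∈ Set.Icc (0:ℝ) 1, σ m t ≤ t) ∧
      (∀ t ∈ δ, ∀ᶠ m in Filter.atTop, σ m t = t) ∧
      (∀ t ∈ Set.Icc (0:ℝ) 1, ∀ c < t, ∀ᶠ m in Filter.atTop, c < σ m t) := by
  obtain ⟨e, he⟩ := hcnt.exists_eq_range ⟨0, h0⟩
  have hem : ∀ j, e j ∈ δ := fun j => he ▸ Set.mem_range_self j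
  set F : ℕ → Finset ℝ := fun m => insert (0:ℝ) ((Finset.range m).image e) with hFdef
  have h0F : ∀ m t, (0:ℝ) ∈ (F m).filter (· ≤ max t 0) :=
    fun m t => Finset.mem_filter.mpr ⟨Finset.mem_insert_self _ _, le_max_right _ _⟩
  set σ : ℕ → ℝ → ℝ := fun m t => ((F m).filter (· ≤ max t 0)).max' ⟨0, h0F m t⟩ with hσdef
  have hFδ : ∀ m, ∀ x ∈ F m, x ∈ δ := by
    intro m x hx
    rcases Finset.mem_insert.mp hx with rfl | hx
    · exact h0
    · rcases Finset.mem_image.mp hx with ⟨j, _, rfl⟩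
      exact hem j
  have hmemfil : ∀ m t, σ m t ∈ (F m).filter (· ≤ max t 0) := fun m t => Finset.max'_mem _ _
  have hmono : ∀ m, Monotone (σ m) := by
    intro m t t' htt'
    apply Finset.max'_subset
    intro x hx
    rcases Finset.mem_filter.mp hx with ⟨hxF, hxle⟩
    exact Finset.mem_filter.mpr ⟨hxF, le_trans hxle (max_le_max htt' le_rfl)⟩
  have hmem : ∀ m, ∀ t ∈ Set.Icc (0:ℝ) 1, σ m t ∈ δ :=
    fun m t _ => hFδ m _ (Finset.mem_filter.mp (hmemfil m t)).1
  have hle : ∀ m, ∀ t ∈ Set.Icc (0:ℝ) 1, σ m t ≤ t := by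
    intro m t ht
    have := (Finset.mem_filter.mp (hmemfil m t)).2
    rwa [max_eq_left ht.1] at this
  have hfix : ∀ t ∈ δ, ∀ᶠ m in Filter.atTop, σ m t = t := by
    intro t ht
    obtain ⟨j, rfl⟩ : ∃ j, e j = t := by
      have : t ∈ Set.range e := he ▸ ht
      exact this
    rw [Filter.eventually_atTop]
    refine ⟨j + 1, fun m hm => ?_⟩
    have ht01 : e j ∈ Set.Icc (0:ℝ) 1 := hsub ht
    have htF : e j ∈ (F m).filter (· ≤ max (e j) 0) := by
      refine Finset.mem_filter.mpr ⟨?_, le_max_left _ _⟩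
      exact Finset.mem_insert_of_mem (Finset.mem_image.mpr ⟨j, Finset.mem_range.mpr hm, rfl⟩)
    have h1 : e j ≤ σ m (e j) := Finset.le_max' _ _ htF
    have h2 : σ m (e j) ≤ e j := hle m (e j) ht01
    exact le_antisymm h2 h1
  refine ⟨σ, hmono, hmem, hle, hfix, ?_⟩
  intro t ht c hc
  by_cases htδ : t ∈ δ
  · exact (hfix t htδ).mono (fun m hm => by rw [hm]; exact hc)
  · have ht0 : 0 < t := lt_of_le_of_ne ht.1 (fun h => htδ (h ▸ h0))
    set a : ℝ := max c 0 with hadef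
    have ha : a < t := max_lt hc ht0
    set w : ℝ := (a + t) / 2 with hwdef
    have hw0 : 0 ≤ w := by
      have : (0:ℝ) ≤ a := le_max_right _ _
      have := ht0
      simp only [hwdef]
      linarith
    have hw1 : w ≤ 1 := by
      have : w < t := by simp only [hwdef]; linarith
      linarith [ht.2]
    have hwcl : w ∈ closure δ := hdense ⟨hw0, hw1⟩
    obtain ⟨b, hbδ, hbd⟩ := Metric.mem_closure_iff.mp hwcl ((t - a) / 2) (by linarith)
    have hb1 : a < b := by
      have : |w - b| < (t - a) / 2 := by
        rw [← Real.dist_eq]; exact hbd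
      have h' := abs_lt.mp this
      simp only [hwdef] at h'
      linarith [h'.2]
    have hb2 : b < t := by
      have : |w - b| < (t - a) / 2 := by
        rw [← Real.dist_eq]; exact hbd
      have h' := abs_lt.mp this
      simp only [hwdef] at h'
      linarith [h'.1]
    obtain ⟨j, rfl⟩ : ∃ j, e j = b := (he ▸ hbδ : b ∈ Set.range e)
    rw [Filter.eventually_atTop]
    refine ⟨j + 1, fun m hm => ?_⟩
    have hbF : e j ∈ (F m).filter (· ≤ max t 0) := by
      refine Finset.mem_filter.mpr ⟨?_, ?_⟩
      · exact Finset.mem_insert_of_mem (Finset.mem_image.mpr ⟨j, Finset.mem_range.mpr hm, rfl⟩)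
      · exact le_trans hb2.le (le_max_left _ _)
    calc c ≤ a := le_max_left _ _
      _ < e j := hb1
      _ ≤ σ m t := Finset.le_max' _ _ hbF

lemma exists_upper_snap (δ : Set ℝ) (hsub : δ ⊆ Set.Icc (0:ℝ) 1) (hcnt : δ.Countable)
    (hdense : Set.Icc (0:ℝ) 1 ⊆ closure δ) (h1 : (1:ℝ) ∈ δ) :
    ∃ σ : ℕ → ℝ → ℝ, (∀ m, Monotone (σ m)) ∧ (∀ m, ∀ t ∈ Set.Icc (0:ℝ) 1, σ m t ∈ δ) ∧
      (∀ m, ∀ t ∈ Set.Icc (0:ℝ) 1, t ≤ σ m t) ∧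
      (∀ t ∈ δ, ∀ᶠ m in Filter.atTop, σ m t = t) ∧
      (∀ t ∈ Set.Icc (0:ℝ) 1, ∀ c, t < c → ∀ᶠ m in Filter.atTop, σ m t < c) := by
  obtain ⟨e, he⟩ := hcnt.exists_eq_range ⟨1, h1⟩
  have hem : ∀ j, e j ∈ δ := fun j => he ▸ Set.mem_range_self j
  set F : ℕ → Finset ℝ := fun m => insert (1:ℝ) ((Finset.range m).image e) with hFdef
  have h1F : ∀ m t, (1:ℝ) ∈ (F m).filter (fun x => min t 1 ≤ x) :=
    fun m t => Finset.mem_filter.mpr ⟨Finset.mem_insert_self _ _, min_le_right _ _⟩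
  set σ : ℕ → ℝ → ℝ := fun m t => ((F m).filter (fun x => min t 1 ≤ x)).min' ⟨1, h1F m t⟩
    with hσdef
  have hFδ : ∀ m, ∀ x ∈ F m, x ∈ δ := by
    intro m x hx
    rcases Finset.mem_insert.mp hx with rfl | hx
    · exact h1
    · rcases Finset.mem_image.mp hx with ⟨j, _, rfl⟩
      exact hem j
  have hmemfil : ∀ m t, σ m t ∈ (F m).filter (fun x => min t 1 ≤ x) :=
    fun m t => Finset.min'_mem _ _
  have hmono : ∀ m, Monotone (σ m) := by
    intro m t t' htt'
    apply Finset.min'_subset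
    intro x hx
    rcases Finset.mem_filter.mp hx with ⟨hxF, hxle⟩
    exact Finset.mem_filter.mpr ⟨hxF, le_trans (min_le_min htt' le_rfl) hxle⟩
  have hmem : ∀ m, ∀ t ∈ Set.Icc (0:ℝ) 1, σ m t ∈ δ :=
    fun m t _ => hFδ m _ (Finset.mem_filter.mp (hmemfil m t)).1
  have hge : ∀ m, ∀ t ∈ Set.Icc (0:ℝ) 1, t ≤ σ m t := by
    intro m t ht
    have := (Finset.mem_filter.mp (hmemfil m t)).2
    rwa [min_eq_left ht.2] at this
  have hfix : ∀ t ∈ δ, ∀ᶠ m in Filter.atTop, σ m t = t := by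
    intro t ht
    obtain ⟨j, rfl⟩ : ∃ j, e j = t := (he ▸ ht : t ∈ Set.range e)
    rw [Filter.eventually_atTop]
    refine ⟨j + 1, fun m hm => ?_⟩
    have ht01 : e j ∈ Set.Icc (0:ℝ) 1 := hsub ht
    have htF : e j ∈ (F m).filter (fun x => min (e j) 1 ≤ x) := by
      refine Finset.mem_filter.mpr ⟨?_, min_le_left _ _⟩
      exact Finset.mem_insert_of_mem (Finset.mem_image.mpr ⟨j, Finset.mem_range.mpr hm, rfl⟩)
    exact le_antisymm (Finset.min'_le _ _ htF) (hge m (e j) ht01)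
  refine ⟨σ, hmono, hmem, hge, hfix, ?_⟩
  intro t ht c hc
  by_cases htδ : t ∈ δ
  · exact (hfix t htδ).mono (fun m hm => by rw [hm]; exact hc)
  · have ht1 : t < 1 := lt_of_le_of_ne ht.2 (fun h => htδ (h ▸ h1))
    set a : ℝ := min c 1 with hadef
    have ha : t < a := lt_min hc ht1
    set w : ℝ := (t + a) / 2 with hwdef
    have hw0 : 0 ≤ w := by
      have := ht.1
      have : (0:ℝ) ≤ t := ht.1
      simp only [hwdef]
      have haa : t < a := ha
      linarith
    have hw1 : w ≤ 1 := by
      have : a ≤ 1 := min_le_right _ _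
      simp only [hwdef]
      linarith [ht.2]
    have hwcl : w ∈ closure δ := hdense ⟨hw0, hw1⟩
    obtain ⟨b, hbδ, hbd⟩ := Metric.mem_closure_iff.mp hwcl ((a - t) / 2) (by linarith)
    have habs : |w - b| < (a - t) / 2 := by rw [← Real.dist_eq]; exact hbd
    have h' := abs_lt.mp habs
    have hb1 : t < b := by simp only [hwdef] at h'; linarith [h'.2]
    have hb2 : b < a := by simp only [hwdef] at h'; linarith [h'.1]
    obtain ⟨j, rfl⟩ : ∃ j, e j = b := (he ▸ hbδ : b ∈ Set.range e)
    rw [Filter.eventually_atTop]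
    refine ⟨j + 1, fun m hm => ?_⟩
    have hbF : e j ∈ (F m).filter (fun x => min t 1 ≤ x) := by
      refine Finset.mem_filter.mpr ⟨?_, ?_⟩
      · exact Finset.mem_insert_of_mem (Finset.mem_image.mpr ⟨j, Finset.mem_range.mpr hm, rfl⟩)
      · exact le_trans (min_le_left _ _) hb1.le
    calc σ m t ≤ e j := Finset.min'_le _ _ hbF
      _ < a := hb2
      _ ≤ c := min_le_left _ _

/-! ### One-sided approximation using Condition S -/

lemma exists_lower_approx (A : Pt n → ℝ) (hA1 : OneIncreasing A) (S : Set ℝ)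
    (hCondSA : CondS A S) (x : Pt n) (hx : inCube x) :
    ∀ s : Finset (Fin n), (∀ j ∈ s, x j ∉ S ∧ 0 < x j) → ∀ ε : ℝ, 0 < ε →
      ∃ y : Pt n, inCube y ∧ (∀ i, y i ≤ x i) ∧ (∀ i ∉ s, y i = x i) ∧
        (∀ i ∈ s, y i < x i) ∧ A x ≤ A y + ε := by
  intro s
  induction s using Finset.induction_on with
  | empty =>
      intro _ ε hε
      exact ⟨x, hx, fun i => le_rfl, fun i _ => rfl,
        fun i hi => absurd hi (Finset.notMem_empty i), by linarith⟩
  | @insert j s' hj ih =>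
      intro hmem ε hε
      obtain ⟨y', hy'c, hy'le, hy'eq, hy'lt, hy'A⟩ :=
        ih (fun i hi => hmem i (Finset.mem_insert_of_mem hi)) (ε/2) (by linarith)
      have hxj := hmem j (Finset.mem_insert_self j s')
      have hyj : y' j = x j := hy'eq j hj
      have hcont := hCondSA y' hy'c j (x j) (hx j) hxj.1
      have hAy' : A (Function.update y' j (x j)) = A y' := by
        rw [← hyj, Function.update_eq_self]
      have hIoo : Set.Ioo (0:ℝ) (x j) ∈ nhdsWithin (x j) (Set.Iio (x j)) :=
        Ioo_mem_nhdsLT_of_mem ⟨hxj.2, le_rfl⟩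
      have hIcc : Set.Icc (0:ℝ) 1 ∈ nhdsWithin (x j) (Set.Iio (x j)) :=
        Filter.mem_of_superset hIoo
          (fun t ht => ⟨le_of_lt ht.1, le_trans (le_of_lt ht.2) (hx j).2⟩)
      have hle2 : nhdsWithin (x j) (Set.Iio (x j)) ≤ nhdsWithin (x j) (Set.Icc (0:ℝ) 1) :=
        nhdsWithin_le_iff.mpr hIcc
      have h2 : Filter.Tendsto (fun t => A (Function.update y' j t))
          (nhdsWithin (x j) (Set.Iio (x j))) (nhds (A y')) := by
        rw [← hAy']
        exact (hcont.mono_left hle2)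
      have heps : ∀ᶠ t in nhdsWithin (x j) (Set.Iio (x j)),
          A y' - ε/2 < A (Function.update y' j t) :=
        h2.eventually (eventually_gt_nhds (by linarith))
      have hltEv : ∀ᶠ t in nhdsWithin (x j) (Set.Iio (x j)), t < x j :=
        eventually_mem_nhdsWithin
      have hIccEv : ∀ᶠ t in nhdsWithin (x j) (Set.Iio (x j)), t ∈ Set.Icc (0:ℝ) 1 := hIcc
      have hne : (nhdsWithin (x j) (Set.Iio (x j))).NeBot := by
        apply mem_closure_iff_nhdsWithin_neBot.mp
        have : x j ∈ closure (Set.Ioo 0 (x j)) := by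
          rw [closure_Ioo (ne_of_lt hxj.2)]
          exact ⟨le_of_lt hxj.2, le_rfl⟩
        exact closure_mono Set.Ioo_subset_Iio_self this
      obtain ⟨t, ht1, ht2, ht3⟩ := (heps.and (hIccEv.and hltEv)).exists
      refine ⟨Function.update y' j t, ?_, ?_, ?_, ?_, ?_⟩
      · intro i
        rcases eq_or_ne i j with rfl | h
        · rw [Function.update_self]; exact ht2
        · rw [Function.update_of_ne h]; exact hy'c i
      · intro i
        rcases eq_or_ne i j with rfl | h
        · rw [Function.update_self]; exact le_of_lt ht3
        · rw [Function.update_of_ne h]; exact hy'le i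
      · intro i hi
        have h1 : i ≠ j := fun h => hi (h ▸ Finset.mem_insert_self j s')
        have h2' : i ∉ s' := fun h => hi (Finset.mem_insert_of_mem h)
        rw [Function.update_of_ne h1]
        exact hy'eq i h2'
      · intro i hi
        rcases Finset.mem_insert.mp hi with rfl | hi'
        · rw [Function.update_self]; exact ht3
        · have h1 : i ≠ j := fun h => hj (h ▸ hi')
          rw [Function.update_of_ne h1]
          exact hy'lt i hi'
      · have : A y' ≤ A (Function.update y' j t) + ε/2 := by linarith [ht1]
        linarith [hy'A]

lemma approx_below (A : Pt n → ℝ) (hA1 : OneIncreasing A) (S : Set ℝ) (hCondSA : CondS A S)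
    (δ : Fin n → Set ℝ) (hδsub : ∀ i, δ i ⊆ Set.Icc (0:ℝ) 1) (hδ0 : ∀ i, (0:ℝ) ∈ δ i)
    (hSδ : ∀ i, S ⊆ δ i)
    (σ : Fin n → ℕ → ℝ → ℝ)
    (hσd : ∀ i m, ∀ t ∈ Set.Icc (0:ℝ) 1, σ i m t ∈ δ i)
    (hσfix : ∀ i, ∀ t ∈ δ i, ∀ᶠ m in Filter.atTop, σ i m t = t)
    (hσap : ∀ i, ∀ t ∈ Set.Icc (0:ℝ) 1, ∀ c < t, ∀ᶠ m in Filter.atTop, c < σ i m t)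
    (x : Pt n) (hx : inCube x) (ε : ℝ) (hε : 0 < ε) :
    ∀ᶠ m in Filter.atTop, A x - ε ≤ A (fun i => σ i m (x i)) := by
  set s : Finset (Fin n) := Finset.univ.filter (fun i => x i ∉ δ i) with hs
  have hsP : ∀ j ∈ s, x j ∉ S ∧ 0 < x j := by
    intro j hjs
    have hnd : x j ∉ δ j := (Finset.mem_filter.mp hjs).2
    refine ⟨fun hS' => hnd (hSδ j hS'), ?_⟩
    rcases lt_or_eq_of_le (hx j).1 with h | h
    · exact h
    · exact absurd (h ▸ hδ0 j) hnd
  obtain ⟨y, hyc, hyle, hyeq, hylt, hyA⟩ := exists_lower_approx A hA1 S hCondSA x hx s hsP ε hε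
  have hev : ∀ᶠ m in Filter.atTop, ∀ i, y i ≤ σ i m (x i) := by
    rw [Filter.eventually_all]
    intro i
    by_cases hiδ : x i ∈ δ i
    · exact (hσfix i (x i) hiδ).mono (fun m hm => by rw [hm]; exact hyle i)
    · have his : i ∈ s := Finset.mem_filter.mpr ⟨Finset.mem_univ i, hiδ⟩
      exact (hσap i (x i) (hx i) (y i) (hylt i his)).mono (fun m hm => le_of_lt hm)
  refine hev.mono (fun m hm => ?_)
  have hsnapc : inCube (fun i => σ i m (x i)) := fun i => hδsub i (hσd i m (x i) (hx i))
  have := hA1 y (fun i => σ i m (x i)) hyc hsnapc hm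
  linarith [hyA]

lemma exists_upper_approx (B : Pt n → ℝ) (hB1 : OneIncreasing B) (S : Set ℝ)
    (hCondSB : CondS B S) (x : Pt n) (hx : inCube x) :
    ∀ s : Finset (Fin n), (∀ j ∈ s, x j ∉ S ∧ x j < 1) → ∀ ε : ℝ, 0 < ε →
      ∃ y : Pt n, inCube y ∧ (∀ i, x i ≤ y i) ∧ (∀ i ∉ s, y i = x i) ∧
        (∀ i ∈ s, x i < y i) ∧ B y ≤ B x + ε := by
  intro s
  induction s using Finset.induction_on with
  | empty =>
      intro _ ε hε
      exact ⟨x, hx, fun i => le_rfl, fun i _ => rfl,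
        fun i hi => absurd hi (Finset.notMem_empty i), by linarith⟩
  | @insert j s' hj ih =>
      intro hmem ε hε
      obtain ⟨y', hy'c, hy'le, hy'eq, hy'lt, hy'B⟩ :=
        ih (fun i hi => hmem i (Finset.mem_insert_of_mem hi)) (ε/2) (by linarith)
      have hxj := hmem j (Finset.mem_insert_self j s')
      have hyj : y' j = x j := hy'eq j hj
      have hcont := hCondSB y' hy'c j (x j) (hx j) hxj.1
      have hBy' : B (Function.update y' j (x j)) = B y' := by
        rw [← hyj, Function.update_eq_self]
      have hIoo : Set.Ioo (x j) (1:ℝ) ∈ nhdsWithin (x j) (Set.Ioi (x j)) :=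
        Ioo_mem_nhdsGT_of_mem ⟨le_rfl, hxj.2⟩
      have hIcc : Set.Icc (0:ℝ) 1 ∈ nhdsWithin (x j) (Set.Ioi (x j)) :=
        Filter.mem_of_superset hIoo
          (fun t ht => ⟨le_trans (hx j).1 (le_of_lt ht.1), le_of_lt ht.2⟩)
      have hle2 : nhdsWithin (x j) (Set.Ioi (x j)) ≤ nhdsWithin (x j) (Set.Icc (0:ℝ) 1) :=
        nhdsWithin_le_iff.mpr hIcc
      have h2 : Filter.Tendsto (fun t => B (Function.update y' j t))
          (nhdsWithin (x j) (Set.Ioi (x j))) (nhds (B y')) := by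
        rw [← hBy']
        exact (hcont.mono_left hle2)
      have heps : ∀ᶠ t in nhdsWithin (x j) (Set.Ioi (x j)),
          B (Function.update y' j t) < B y' + ε/2 :=
        h2.eventually (eventually_lt_nhds (by linarith))
      have hltEv : ∀ᶠ t in nhdsWithin (x j) (Set.Ioi (x j)), x j < t :=
        eventually_mem_nhdsWithin
      have hIccEv : ∀ᶠ t in nhdsWithin (x j) (Set.Ioi (x j)), t ∈ Set.Icc (0:ℝ) 1 := hIcc
      have hne : (nhdsWithin (x j) (Set.Ioi (x j))).NeBot := by
        apply mem_closure_iff_nhdsWithin_neBot.mp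
        have : x j ∈ closure (Set.Ioo (x j) 1) := by
          rw [closure_Ioo (ne_of_lt hxj.2)]
          exact ⟨le_rfl, le_of_lt hxj.2⟩
        exact closure_mono Set.Ioo_subset_Ioi_self this
      obtain ⟨t, ht1, ht2, ht3⟩ := (heps.and (hIccEv.and hltEv)).exists
      refine ⟨Function.update y' j t, ?_, ?_, ?_, ?_, ?_⟩
      · intro i
        rcases eq_or_ne i j with rfl | h
        · rw [Function.update_self]; exact ht2
        · rw [Function.update_of_ne h]; exact hy'c i
      · intro i
        rcases eq_or_ne i j with rfl | h
        · rw [Function.update_self]; exact le_of_lt ht3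
        · rw [Function.update_of_ne h]; exact hy'le i
      · intro i hi
        have h1 : i ≠ j := fun h => hi (h ▸ Finset.mem_insert_self j s')
        have h2' : i ∉ s' := fun h => hi (Finset.mem_insert_of_mem h)
        rw [Function.update_of_ne h1]
        exact hy'eq i h2'
      · intro i hi
        rcases Finset.mem_insert.mp hi with rfl | hi'
        · rw [Function.update_self]; exact ht3
        · have h1 : i ≠ j := fun h => hj (h ▸ hi')
          rw [Function.update_of_ne h1]
          exact hy'lt i hi'
      · have : B (Function.update y' j t) ≤ B y' + ε/2 := le_of_lt ht1
        linarith [hy'B]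

lemma approx_above (B : Pt n → ℝ) (hB1 : OneIncreasing B) (S : Set ℝ) (hCondSB : CondS B S)
    (δ : Fin n → Set ℝ) (hδsub : ∀ i, δ i ⊆ Set.Icc (0:ℝ) 1) (hδ1 : ∀ i, (1:ℝ) ∈ δ i)
    (hSδ : ∀ i, S ⊆ δ i)
    (σ : Fin n → ℕ → ℝ → ℝ)
    (hσd : ∀ i m, ∀ t ∈ Set.Icc (0:ℝ) 1, σ i m t ∈ δ i)
    (hσfix : ∀ i, ∀ t ∈ δ i, ∀ᶠ m in Filter.atTop, σ i m t = t)
    (hσap : ∀ i, ∀ t ∈ Set.Icc (0:ℝ) 1, ∀ c, t < c → ∀ᶠ m in Filter.atTop, σ i m t < c)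
    (x : Pt n) (hx : inCube x) (ε : ℝ) (hε : 0 < ε) :
    ∀ᶠ m in Filter.atTop, B (fun i => σ i m (x i)) ≤ B x + ε := by
  set s : Finset (Fin n) := Finset.univ.filter (fun i => x i ∉ δ i) with hs
  have hsP : ∀ j ∈ s, x j ∉ S ∧ x j < 1 := by
    intro j hjs
    have hnd : x j ∉ δ j := (Finset.mem_filter.mp hjs).2
    refine ⟨fun hS' => hnd (hSδ j hS'), ?_⟩
    rcases lt_or_eq_of_le (hx j).2 with h | h
    · exact h
    · exact absurd (h ▸ hδ1 j) hnd
  obtain ⟨y, hyc, hyle, hyeq, hylt, hyB⟩ := exists_upper_approx B hB1 S hCondSB x hx s hsP ε hε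
  have hev : ∀ᶠ m in Filter.atTop, ∀ i, σ i m (x i) ≤ y i := by
    rw [Filter.eventually_all]
    intro i
    by_cases hiδ : x i ∈ δ i
    · exact (hσfix i (x i) hiδ).mono (fun m hm => by rw [hm]; exact hyle i)
    · have his : i ∈ s := Finset.mem_filter.mpr ⟨Finset.mem_univ i, hiδ⟩
      exact (hσap i (x i) (hx i) (y i) (hylt i his)).mono (fun m hm => le_of_lt hm)
  refine hev.mono (fun m hm => ?_)
  have hsnapc : inCube (fun i => σ i m (x i)) := fun i => hδsub i (hσd i m (x i) (hx i))
  have := hB1 (fun i => σ i m (x i)) y hsnapc hyc hm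
  linarith [hyB]

/-! ### The core extension construction via an ultrafilter limit -/

lemma ultra_limit_exists (f : ℕ → ℝ) (h : ∀ m, f m ∈ Set.Icc (0:ℝ) 1) (U : Ultrafilter ℕ) :
    ∃ c ∈ Set.Icc (0:ℝ) 1, Filter.Tendsto f (U : Filter ℕ) (nhds c) := by
  have hle : (↑(U.map f) : Filter ℝ) ≤ Filter.principal (Set.Icc 0 1) := by
    rw [Ultrafilter.coe_map, Filter.le_principal_iff]
    exact Filter.mem_map.mpr (Filter.univ_mem' (fun m => h m))
  obtain ⟨c, hc, hc2⟩ := isCompact_Icc.ultrafilter_le_nhds (U.map f) hle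
  refine ⟨c, hc, ?_⟩
  rwa [Filter.Tendsto, ← Ultrafilter.coe_map]

lemma core (k : ℕ)
    (A B C : Pt n → ℝ) (δ : Fin n → Set ℝ)
    (hδsub : ∀ i, δ i ⊆ Set.Icc (0:ℝ) 1)
    (D : Set (Pt n)) (hDdef : D = {x : Pt n | ∀ i, x i ∈ δ i})
    (hCI : ∀ d ∈ D, C d ∈ Set.Icc (0:ℝ) 1)
    (hCincr : KIncreasingOn k D C)
    (hCsand : ∀ d ∈ D, A d ≤ C d ∧ C d ≤ B d)
    (σ : Fin n → ℕ → ℝ → ℝ)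
    (hσm : ∀ i m, Monotone (σ i m))
    (hσd : ∀ i m, ∀ t ∈ Set.Icc (0:ℝ) 1, σ i m t ∈ δ i)
    (hσfix : ∀ i, ∀ t ∈ δ i, ∀ᶠ m in Filter.atTop, σ i m t = t)
    (ha' : ∀ x, inCube x → ∀ ε : ℝ, 0 < ε →
      ∀ᶠ m in Filter.atTop, A x - ε ≤ A (fun i => σ i m (x i)))
    (hb' : ∀ x, inCube x → ∀ ε : ℝ, 0 < ε →
      ∀ᶠ m in Filter.atTop, B (fun i => σ i m (x i)) ≤ B x + ε) :
    ∃ Chat : Pt n → ℝ, KIncreasingOn k (cubeSet n) Chat ∧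
      (∀ d ∈ D, Chat d = C d) ∧
      (∀ x : Pt n, inCube x → A x ≤ Chat x ∧ Chat x ≤ B x) := by
  classical
  set U : Ultrafilter ℕ := Ultrafilter.of Filter.atTop with hUdef
  have hUle : (U : Filter ℕ) ≤ Filter.atTop := Ultrafilter.of_le _
  have hUne : (U : Filter ℕ).NeBot := Ultrafilter.neBot U
  set snap : ℕ → Pt n → Pt n := fun m x => fun i => σ i m (x i) with hsnapdef
  have hsnapD : ∀ m x, inCube x → snap m x ∈ D := by
    intro m x hx
    rw [hDdef]
    intro i
    exact hσd i m (x i) (hx i)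
  have hex : ∀ x, inCube x → ∃ c ∈ Set.Icc (0:ℝ) 1,
      Filter.Tendsto (fun m => C (snap m x)) (U : Filter ℕ) (nhds c) :=
    fun x hx => ultra_limit_exists _ (fun m => hCI _ (hsnapD m x hx)) U
  set Chat : Pt n → ℝ := fun x =>
    if h : inCube x then (hex x h).choose else 0 with hChatdef
  have hT : ∀ x, ∀ hx : inCube x,
      Filter.Tendsto (fun m => C (snap m x)) (U : Filter ℕ) (nhds (Chat x)) := by
    intro x hx
    have hc : Chat x = (hex x hx).choose := by simp only [hChatdef, dif_pos hx]
    rw [hc]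
    exact (hex x hx).choose_spec.2
  refine ⟨Chat, ?_, ?_, ?_⟩
  · -- k-increasing on the cube
    intro R hR hRv
    have hvcube : ∀ v ∈ R.vertices, inCube v := fun v hv => hRv v hv
    have htends : Filter.Tendsto
        (fun m => ∑ v ∈ R.vertices, (R.sign k v : ℝ) * C (snap m v)) (U : Filter ℕ)
        (nhds (∑ v ∈ R.vertices, (R.sign k v : ℝ) * Chat v)) := by
      apply tendsto_finset_sum
      intro v hv
      exact (hT v (hvcube v hv)).const_mul _
    have hnonneg : ∀ m, 0 ≤ ∑ v ∈ R.vertices, (R.sign k v : ℝ) * C (snap m v) := by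
      intro m
      exact snap_vvol_nonneg δ hδsub D hDdef C hCincr (fun i => σ i m)
        (fun i => hσm i m) (fun i => hσd i m) R hR
    exact ge_of_tendsto htends (Filter.Eventually.of_forall hnonneg)
  · -- agrees with C on D
    intro d hd
    have hdδ : ∀ i, d i ∈ δ i := by rw [hDdef] at hd; exact hd
    have hdc : inCube d := fun i => hδsub i (hdδ i)
    have hfix : ∀ᶠ m in Filter.atTop, snap m d = d := by
      have h1 : ∀ᶠ m in Filter.atTop, ∀ i, σ i m (d i) = d i :=
        Filter.eventually_all.mpr (fun i => hσfix i (d i) (hdδ i))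
      exact h1.mono (fun m hm => funext (fun i => hm i))
    have hCfix : ∀ᶠ m in (U : Filter ℕ), C (snap m d) = C d :=
      (hfix.filter_mono hUle).mono (fun m hm => by rw [hm])
    have htc : Filter.Tendsto (fun m => C (snap m d)) (U : Filter ℕ) (nhds (C d)) :=
      Filter.Tendsto.congr' (Filter.EventuallyEq.symm hCfix) tendsto_const_nhds
    exact tendsto_nhds_unique (hT d hdc) htc
  · -- sandwiched between A and B
    intro x hx
    constructor
    · apply le_of_forall_pos_le_add
      intro ε hε
      have h2 : ∀ᶠ m in (U : Filter ℕ), A x - ε ≤ C (snap m x) :=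
        ((ha' x hx ε hε).filter_mono hUle).mono
          (fun m hm => le_trans hm (hCsand _ (hsnapD m x hx)).1)
      have := ge_of_tendsto (hT x hx) h2
      linarith
    · apply le_of_forall_pos_le_add
      intro ε hε
      have h2 : ∀ᶠ m in (U : Filter ℕ), C (snap m x) ≤ B x + ε :=
        ((hb' x hx ε hε).filter_mono hUle).mono
          (fun m hm => le_trans (hCsand _ (hsnapD m x hx)).2 hm)
      exact le_of_tendsto (hT x hx) h2

end StmtAux





open KIncr
/-- Proposition 6.1: extension of `C` from the mesh to the
unit cube for standardized bounds satisfying Condition S. -/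
theorem stmt15 (n k : ℕ) (hn : 1 ≤ n) (hk1 : 1 ≤ k) (hkn : k ≤ n)
    (A B : Pt n → ℝ) (hA : Standardized A) (hB : Standardized B)
    (hAI : MapsToI A) (hBI : MapsToI B)
    (hAB : ∀ x : Pt n, inCube x → A x ≤ B x)
    (S : Set ℝ) (hS : S.Countable) (hSsub : S ⊆ Set.Icc (0:ℝ) 1)
    (hCondS : CondS A S ∨ CondS B S)
    (δ : Fin n → Set ℝ)
    (hδ : ∀ i, δ i ⊆ Set.Icc (0:ℝ) 1 ∧ (δ i).Countable ∧ (δ i).Infinite ∧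
      Set.Icc (0:ℝ) 1 ⊆ closure (δ i) ∧ (0:ℝ) ∈ δ i ∧ (1:ℝ) ∈ δ i)
    (hSδ : ∀ i, S ⊆ δ i)
    (D : Set (Pt n)) (hDdef : D = {x : Pt n | ∀ i, x i ∈ δ i})
    (C : Pt n → ℝ) (hCI : ∀ d ∈ D, C d ∈ Set.Icc (0:ℝ) 1)
    (hCincr : KIncreasingOn k D C)
    (hCsand : ∀ d ∈ D, A d ≤ C d ∧ C d ≤ B d) :
    ∃ Chat : Pt n → ℝ, KIncreasingOn k (cubeSet n) Chat ∧
      (∀ d ∈ D, Chat d = C d) ∧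
      (∀ x : Pt n, inCube x → A x ≤ Chat x ∧ Chat x ≤ B x) := by
  have hA1 : OneIncreasing A := hA.2.1
  have hB1 : OneIncreasing B := hB.2.1
  rcases hCondS with hCA | hCB
  · -- A satisfies Condition S: snap from below
    have hch : ∀ i : Fin n, ∃ σ : ℕ → ℝ → ℝ, (∀ m, Monotone (σ m)) ∧
        (∀ m, ∀ t ∈ Set.Icc (0:ℝ) 1, σ m t ∈ δ i) ∧
        (∀ m, ∀ t ∈ Set.Icc (0:ℝ) 1, σ m t ≤ t) ∧
        (∀ t ∈ δ i, ∀ᶠ m in Filter.atTop, σ m t = t) ∧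
        (∀ t ∈ Set.Icc (0:ℝ) 1, ∀ c < t, ∀ᶠ m in Filter.atTop, c < σ m t) := fun i =>
      StmtAux.exists_lower_snap (δ i) (hδ i).1 (hδ i).2.1 (hδ i).2.2.2.1 (hδ i).2.2.2.2.1
    choose σ hm hd hle hfix hap using hch
    refine StmtAux.core k A B C δ (fun i => (hδ i).1) D hDdef hCI hCincr hCsand σ
      (fun i m => hm i m) (fun i m => hd i m) (fun i t ht => hfix i t ht) ?_ ?_
    · intro x hx ε hε
      exact StmtAux.approx_below A hA1 S hCA δ (fun i => (hδ i).1)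
        (fun i => (hδ i).2.2.2.2.1) hSδ σ (fun i m => hd i m) hfix hap x hx ε hε
    · intro x hx ε hε
      apply Filter.Eventually.of_forall
      intro m
      have hsc : inCube (fun i => σ i m (x i)) := fun i => (hδ i).1 (hd i m (x i) (hx i))
      have hles : ∀ i, σ i m (x i) ≤ x i := fun i => hle i m (x i) (hx i)
      have := hB1 _ x hsc hx hles
      linarith
  · -- B satisfies Condition S: snap from above
    have hch : ∀ i : Fin n, ∃ σ : ℕ → ℝ → ℝ, (∀ m, Monotone (σ m)) ∧
        (∀ m, ∀ t ∈ Set.Icc (0:ℝ) 1, σ m t ∈ δ i) ∧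
        (∀ m, ∀ t ∈ Set.Icc (0:ℝ) 1, t ≤ σ m t) ∧
        (∀ t ∈ δ i, ∀ᶠ m in Filter.atTop, σ m t = t) ∧
        (∀ t ∈ Set.Icc (0:ℝ) 1, ∀ c, t < c → ∀ᶠ m in Filter.atTop, σ m t < c) := fun i =>
      StmtAux.exists_upper_snap (δ i) (hδ i).1 (hδ i).2.1 (hδ i).2.2.2.1 (hδ i).2.2.2.2.2
    choose σ hm hd hge hfix hap using hch
    refine StmtAux.core k A B C δ (fun i => (hδ i).1) D hDdef hCI hCincr hCsand σ
      (fun i m => hm i m) (fun i m => hd i m) (fun i t ht => hfix i t ht) ?_ ?_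
    · intro x hx ε hε
      apply Filter.Eventually.of_forall
      intro m
      have hsc : inCube (fun i => σ i m (x i)) := fun i => (hδ i).1 (hd i m (x i) (hx i))
      have hges : ∀ i, x i ≤ σ i m (x i) := fun i => hge i m (x i) (hx i)
      have := hA1 x _ hx hsc hges
      linarith
    · intro x hx ε hε
      exact StmtAux.approx_above B hB1 S hCB δ (fun i => (hδ i).1)
        (fun i => (hδ i).2.2.2.2.2) hSδ σ (fun i m => hd i m) hfix hap x hx ε hε
end

section
/- Let A, B : I^n → I be semicopulas with A ≤ B and fix an integer k with 2 ≤ k ≤ n. Let D ⊆ I^n be a dense countably infinite mesh and let C : D → I be a k-increasing function on D such that A(d) ≤ C(d) ≤ B(d) for all d ∈ D. Then there exists a k-increasing function C' : I^n → I such that C'(d) = C(d) for all d ∈ D and A(x) ≤ C'(x) ≤ B(x) for all x ∈ I^n. -/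
open scoped Classical BigOperators

/-!
Since `A ≤ C ≤ B` on the mesh and `A`, `B` are semicopulas, `C` is grounded and has uniform
marginals on the mesh. Groundedness lowers the order of nonnegative mixed differences: for a box
whose `t`-side starts at `0`, the difference in the directions `S ∪ {t}` is the `S`-difference of
its top face. Hence `C` has nonnegative mixed differences of every order `≤ k`, in particular of
orders `1` and `2`. The first-order ones make `C` increasing in each variable; the second-order ones make an increment in one variable increase with the other
variables, so by the uniform marginals it is at most the increment of that variable. Thus `C` is
Lipschitz on the mesh, and its McShane extension `C'` is continuous. By density, nonnegativity of
`k`-th mixed differences passes to the cube, and so do the bounds `A ≤ C' ≤ B`, approximating a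
point from above for `A` and from below for `B` and using their monotonicity.
-/

namespace KIncr

open Finset Function

variable {n : ℕ}

lemma _root_.Continuous.finset_piecewise {X ι : Type*} {π : ι → Type*} [TopologicalSpace X]
    [∀ i, TopologicalSpace (π i)] {u v : X → ∀ i, π i} (hu : Continuous u) (hv : Continuous v)
    (T : Finset ι) [∀ j, Decidable (j ∈ T)] : Continuous fun x => T.piecewise (u x) (v x) :=
  continuous_pi fun i => by
    by_cases hi : i ∈ T
    · simp only [piecewise_eq_of_mem _ _ _ hi]; exact (continuous_apply i).comp hu
    · simp only [piecewise_eq_of_notMem _ _ _ hi]; exact (continuous_apply i).comp hv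

lemma mem_closure_inter_Ici {s : Set ℝ} {a b x : ℝ} (hs : Set.Icc a b ⊆ closure s) (hb : b ∈ s)
    (hx : x ∈ Set.Icc a b) : x ∈ closure (s ∩ Set.Ici x) := by
  rcases hx.2.eq_or_lt with rfl | hxb
  · exact subset_closure ⟨hb, Set.mem_Ici.2 le_rfl⟩
  have hIoo : Set.Ioo x b ⊆ closure (Set.Ioo x b ∩ s) := fun y hy =>
    isOpen_Ioo.inter_closure ⟨hy, hs ⟨hx.1.trans hy.1.le, hy.2.le⟩⟩
  have := closure_minimal hIoo isClosed_closure
    (by rw [closure_Ioo hxb.ne]; exact Set.left_mem_Icc.2 hxb.le)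
  refine closure_mono ?_ this
  rintro y ⟨⟨hxy, -⟩, hy⟩
  exact ⟨hy, hxy.le⟩

lemma mem_closure_inter_Iic {s : Set ℝ} {a b x : ℝ} (hs : Set.Icc a b ⊆ closure s) (ha : a ∈ s)
    (hx : x ∈ Set.Icc a b) : x ∈ closure (s ∩ Set.Iic x) := by
  rcases hx.1.eq_or_lt with rfl | hax
  · exact subset_closure ⟨ha, Set.mem_Iic.2 le_rfl⟩
  have hIoo : Set.Ioo a x ⊆ closure (Set.Ioo a x ∩ s) := fun y hy =>
    isOpen_Ioo.inter_closure ⟨hy, hs ⟨hy.1.le, hy.2.le.trans hx.2⟩⟩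
  have := closure_minimal hIoo isClosed_closure
    (by rw [closure_Ioo hax.ne]; exact Set.right_mem_Icc.2 hax.le)
  refine closure_mono ?_ this
  rintro y ⟨⟨-, hyx⟩, hy⟩
  exact ⟨hy, hyx.le⟩

noncomputable def mixedDiff (f : Pt n → ℝ) (lo hi : Pt n) (S : Finset (Fin n)) : ℝ :=
  ∑ T ∈ S.powerset, (-1 : ℝ) ^ (#S - #T) * f (T.piecewise hi lo)

lemma mixedDiff_insert (f : Pt n → ℝ) (lo hi : Pt n) {S : Finset (Fin n)} {t : Fin n}
    (ht : t ∉ S) :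
    mixedDiff f lo hi (insert t S) =
      mixedDiff f (update lo t (hi t)) hi S - mixedDiff f lo hi S := by
  rw [mixedDiff, sum_powerset_insert ht, card_insert_of_notMem ht, mixedDiff, mixedDiff,
    sub_eq_add_neg, ← sum_neg_distrib, add_comm]
  congr 1
  · refine sum_congr rfl fun T hT => ?_
    have htT : t ∉ T := fun h => ht (mem_powerset.1 hT h)
    rw [card_insert_of_notMem htT, piecewise_insert, update_piecewise_of_notMem _ _ _ htT,
      Nat.add_sub_add_right]
  · refine sum_congr rfl fun T hT => ?_
    rw [Nat.sub_add_comm (card_le_card (mem_powerset.1 hT)), pow_succ]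
    ring

lemma mixedDiff_singleton (f : Pt n → ℝ) (lo hi : Pt n) (i : Fin n) :
    mixedDiff f lo hi {i} = f (update lo i (hi i)) - f lo := by
  rw [← insert_empty, mixedDiff_insert f lo hi (notMem_empty i)]
  simp [mixedDiff]

lemma mixedDiff_eq_zero_of_eq (f : Pt n → ℝ) {lo hi : Pt n} {S : Finset (Fin n)} {t : Fin n}
    (ht : t ∈ S) (h : lo t = hi t) : mixedDiff f lo hi S = 0 := by
  rw [← insert_erase ht, mixedDiff_insert f lo hi (notMem_erase t S), ← h, update_eq_self,
    sub_self]

lemma vvol_eq_mixedDiff (k : ℕ) (f : Pt n → ℝ) (R : Box n) (hle : R.lo ≤ R.hi)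
    (hk : #{i | R.lo i < R.hi i} = k) :
    Vvol k f R = mixedDiff f R.lo R.hi {i | R.lo i < R.hi i} := by
  set S : Finset (Fin n) := {i | R.lo i < R.hi i}
  have hS : ∀ i, i ∈ S ↔ R.lo i < R.hi i := by simp [S]
  have hvert : R.vertices = S.powerset.image fun T => T.piecewise R.hi R.lo := by
    ext v
    simp only [Box.vertices, mem_image, mem_univ, true_and, mem_powerset]
    constructor
    · rintro ⟨ε, rfl⟩
      refine ⟨{i ∈ S | ε i}, filter_subset _ _, funext fun i => ?_⟩
      by_cases hi : i ∈ S
      · by_cases hε : ε i <;> simp [piecewise, hi, hε]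
      · have : R.lo i = R.hi i := (hle i).eq_of_not_lt ((hS i).not.1 hi)
        by_cases hε : ε i <;> simp [piecewise, hi, hε, this]
    · rintro ⟨T, -, rfl⟩
      exact ⟨fun i => decide (i ∈ T), funext fun i => by by_cases h : i ∈ T <;> simp [h]⟩
  have hinj : Set.InjOn (fun T : Finset (Fin n) => T.piecewise R.hi R.lo) (S.powerset : Set _) := by
    intro T₁ h₁ T₂ h₂ heq
    ext i
    by_cases hi : i ∈ S
    · have hne := ((hS i).1 hi).ne
      have := congrFun heq i
      by_cases hi₁ : i ∈ T₁ <;> by_cases hi₂ : i ∈ T₂ <;> simp_all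
    · exact iff_of_false (fun h => hi (mem_powerset.1 h₁ h)) (fun h => hi (mem_powerset.1 h₂ h))
  rw [Vvol, hvert, sum_image hinj]
  refine sum_congr rfl fun T hT => ?_
  have hTS := mem_powerset.1 hT
  have hlo : ({i | T.piecewise R.hi R.lo i = R.lo i} : Finset (Fin n)) = Tᶜ := by
    ext i
    by_cases hi : i ∈ T
    · simp [hi, ((hS i).1 (hTS hi)).ne']
    · simp [hi]
  have hkn : k ≤ n := hk ▸ card_le_univ S |>.trans_eq (Fintype.card_fin n)
  have hTk : #T ≤ k := hk ▸ card_le_card hTS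
  rw [Box.sign, hlo, card_compl, Fintype.card_fin, hk,
    show n - #T + (n - k) = (k - #T) + 2 * (n - k) by omega]
  simp [pow_add, pow_mul]

def MixedDiffNonnegOn (D : Set (Pt n)) (f : Pt n → ℝ) (S : Finset (Fin n)) : Prop :=
  ∀ lo ∈ D, ∀ hi ∈ D, lo ≤ hi → (∀ i ∉ S, lo i = hi i) → 0 ≤ mixedDiff f lo hi S

section Mesh

variable {δ : Fin n → Set ℝ} {f : Pt n → ℝ}

lemma update_mem_univ_pi {p : Pt n} (hp : p ∈ Set.univ.pi δ) {i : Fin n} {c : ℝ}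
    (hc : c ∈ δ i) : update p i c ∈ Set.univ.pi δ :=
  (Set.update_mem_pi_iff_of_mem hp).2 fun _ => hc

lemma mixedDiffNonnegOn_of_kIncreasingOn {k : ℕ} (hδ : ∀ i, δ i ⊆ Set.Icc 0 1)
    (hf : KIncreasingOn k (Set.univ.pi δ) f) {S : Finset (Fin n)} (hS : #S = k) :
    MixedDiffNonnegOn (Set.univ.pi δ) f S := by
  intro lo hlo hi hhi hle hoff
  by_cases hdeg : ∃ i ∈ S, lo i = hi i
  · obtain ⟨i, hiS, heq⟩ := hdeg
    exact (mixedDiff_eq_zero_of_eq f hiS heq).ge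
  push Not at hdeg
  have hS' : S = ({i | lo i < hi i} : Finset (Fin n)) := by
    ext i
    simp only [mem_filter, mem_univ, true_and]
    exact ⟨fun h => (hle i).lt_of_ne (hdeg i h), fun h => by_contra fun h' => h.ne (hoff i h')⟩
  have hbox : Box.IsKBox k ⟨lo, hi⟩ :=
    ⟨fun i => hδ i (hlo i trivial), fun i => hδ i (hhi i trivial), hle, hS' ▸ hS⟩
  have hvert : ∀ v ∈ Box.vertices ⟨lo, hi⟩, v ∈ Set.univ.pi δ := by
    simp only [Box.vertices, mem_image, mem_univ, true_and, forall_exists_index,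
      forall_apply_eq_imp_iff]
    exact fun ε i _ => by dsimp only; split_ifs <;> simp [hlo i trivial, hhi i trivial]
  have := hf _ hbox hvert
  rwa [vvol_eq_mixedDiff k f _ hle hbox.2.2.2, ← hS'] at this

lemma MixedDiffNonnegOn.of_insert (hδ : ∀ i, δ i ⊆ Set.Icc 0 1) (h0 : ∀ i, (0 : ℝ) ∈ δ i)
    (hg : ∀ x ∈ Set.univ.pi δ, (∃ i, x i = 0) → f x = 0) {S : Finset (Fin n)} {t : Fin n}
    (ht : t ∉ S) (h : MixedDiffNonnegOn (Set.univ.pi δ) f (insert t S)) :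
    MixedDiffNonnegOn (Set.univ.pi δ) f S := by
  intro lo hlo hi hhi hle hoff
  have hL := update_mem_univ_pi hlo (h0 t)
  have hzero : mixedDiff f (update lo t 0) hi S = 0 := by
    refine sum_eq_zero fun T hT => ?_
    have htT : t ∉ T := fun h => ht (mem_powerset.1 hT h)
    rw [hg _ (piecewise_mem_set_pi _ hhi hL) ⟨t, by simp [htT]⟩, mul_zero]
  have hins := h _ hL hi hhi
    (fun i => by
      rcases eq_or_ne i t with rfl | hit
      · simpa using (hδ i (hhi i trivial)).1
      · simpa [hit] using hle i)
    (fun i hi' => by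
      rw [mem_insert, not_or] at hi'
      simpa [hi'.1] using hoff i hi'.2)
  rwa [mixedDiff_insert f _ _ ht, hzero, sub_zero, update_idem, ← hoff t ht, update_eq_self]
    at hins

lemma mixedDiffNonnegOn_of_card_le {k : ℕ} (hkn : k ≤ n) (hδ : ∀ i, δ i ⊆ Set.Icc 0 1)
    (h0 : ∀ i, (0 : ℝ) ∈ δ i) (hg : ∀ x ∈ Set.univ.pi δ, (∃ i, x i = 0) → f x = 0)
    (hk : ∀ S : Finset (Fin n), #S = k → MixedDiffNonnegOn (Set.univ.pi δ) f S)
    {S : Finset (Fin n)} (hS : #S ≤ k) : MixedDiffNonnegOn (Set.univ.pi δ) f S := by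
  obtain ⟨m, hm⟩ := Nat.exists_eq_add_of_le hS
  induction m generalizing S with
  | zero => exact hk S hm.symm
  | succ m ih =>
    obtain ⟨t, ht⟩ : ∃ t, t ∉ S := by
      by_contra! hall
      rw [eq_univ_of_forall hall, card_univ, Fintype.card_fin] at hm
      omega
    refine (ih ?_ ?_).of_insert hδ h0 hg ht <;> rw [card_insert_of_notMem ht] <;> omega

lemma monotoneOn_of_le_update {g : Pt n → ℝ}
    (hg : ∀ p ∈ Set.univ.pi δ, ∀ j, ∀ c ∈ δ j, p j ≤ c → g p ≤ g (update p j c)) :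
    MonotoneOn g (Set.univ.pi δ) := by
  intro z hz w hw hzw
  suffices ∀ U : Finset (Fin n), g z ≤ g (U.piecewise w z) by simpa using this univ
  intro U
  induction U using Finset.induction_on with
  | empty => simp
  | insert j U hj ih =>
    rw [piecewise_insert]
    refine ih.trans (hg _ (piecewise_mem_set_pi _ hw hz) j _ (hw j trivial) ?_)
    rw [piecewise_eq_of_notMem _ _ _ hj]
    exact hzw j

lemma lipschitzOnWith_of_abs_update_sub_le {g : Pt n → ℝ}
    (hg : ∀ p ∈ Set.univ.pi δ, ∀ j, ∀ c ∈ δ j, |g (update p j c) - g p| ≤ |c - p j|) :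
    LipschitzOnWith n g (Set.univ.pi δ) := by
  refine LipschitzOnWith.of_dist_le_mul fun d hd e he => ?_
  have hsum : ∀ U : Finset (Fin n), |g (U.piecewise d e) - g e| ≤ ∑ i ∈ U, |d i - e i| := by
    intro U
    induction U using Finset.induction_on with
    | empty => simp
    | insert j U hj ih =>
      have hj' := hg _ (piecewise_mem_set_pi U hd he) j _ (hd j trivial)
      rw [piecewise_eq_of_notMem _ _ _ hj] at hj'
      rw [piecewise_insert, sum_insert hj]
      exact (abs_sub_le _ _ _).trans (add_le_add hj' ih)
  calc dist (g d) (g e) ≤ ∑ i, |d i - e i| := by simpa [Real.dist_eq] using hsum univ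
    _ ≤ ∑ _i : Fin n, dist d e := sum_le_sum fun i _ => by
        rw [← Real.dist_eq]; exact dist_le_pi_dist d e i
    _ = n * dist d e := by simp

lemma MixedDiffNonnegOn.update_le_update {i : Fin n}
    (h : MixedDiffNonnegOn (Set.univ.pi δ) f {i}) {p : Pt n} (hp : p ∈ Set.univ.pi δ)
    {a b : ℝ} (ha : a ∈ δ i) (hb : b ∈ δ i) (hab : a ≤ b) :
    f (update p i a) ≤ f (update p i b) := by
  have := h _ (update_mem_univ_pi hp ha) _ (update_mem_univ_pi hp hb)
    (update_le_update_iff.2 ⟨hab, fun _ _ => le_rfl⟩)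
    (fun j hj => by rw [mem_singleton] at hj; simp [hj])
  rwa [mixedDiff_singleton, update_idem, update_self, sub_nonneg] at this

lemma MixedDiffNonnegOn.update_sub_update_le {i t : Fin n} (hti : t ≠ i)
    (h : MixedDiffNonnegOn (Set.univ.pi δ) f {t, i}) {q : Pt n} (hq : q ∈ Set.univ.pi δ)
    {a b : ℝ} (ha : a ∈ δ i) (hb : b ∈ δ i) (hab : a ≤ b) {c : ℝ} (hc : c ∈ δ t)
    (hqc : q t ≤ c) :
    f (update q i b) - f (update q i a) ≤
      f (update (update q t c) i b) - f (update (update q t c) i a) := by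
  have := h _ (update_mem_univ_pi hq ha) _
    (update_mem_univ_pi (update_mem_univ_pi hq hc) hb)
    (fun j => by
      rcases eq_or_ne j i with rfl | hji
      · simpa using hab
      rcases eq_or_ne j t with rfl | hjt
      · simpa [hji] using hqc
      · simp [hji, hjt])
    (fun j hj => by
      rw [mem_insert, mem_singleton, not_or] at hj
      simp [hj.1, hj.2])
  rw [mixedDiff_insert f _ _ (by simpa using hti), mixedDiff_singleton, mixedDiff_singleton,
    update_self, update_of_ne hti, update_self, update_idem, update_comm hti.symm,
    update_idem] at this
  linarith

lemma lipschitzOnWith_of_mixedDiffNonnegOn (hδ : ∀ i, δ i ⊆ Set.Iic 1) (h1 : ∀ i, (1 : ℝ) ∈ δ i)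
    (hf1 : ∀ i, MixedDiffNonnegOn (Set.univ.pi δ) f {i})
    (hf2 : ∀ i t, t ≠ i → MixedDiffNonnegOn (Set.univ.pi δ) f {t, i})
    (hm : ∀ i, ∀ s ∈ δ i, f (update (fun _ => 1) i s) = s) :
    LipschitzOnWith n f (Set.univ.pi δ) := by
  have hinc : ∀ i, ∀ p ∈ Set.univ.pi δ, ∀ a ∈ δ i, ∀ b ∈ δ i, a ≤ b →
      |f (update p i b) - f (update p i a)| ≤ |b - a| := by
    intro i p hp a ha b hb hab
    have hmono : MonotoneOn (fun q => f (update q i b) - f (update q i a)) (Set.univ.pi δ) := by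
      refine monotoneOn_of_le_update fun q hq t c hc hqc => ?_
      rcases eq_or_ne t i with rfl | hti
      · simp
      · exact (hf2 i t hti).update_sub_update_le hti hq ha hb hab hc hqc
    have hle := hmono hp (fun j _ => h1 j) fun j => hδ j (hp j trivial)
    rw [abs_of_nonneg (sub_nonneg.2 ((hf1 i).update_le_update hp ha hb hab)),
      abs_of_nonneg (sub_nonneg.2 hab)]
    simpa [hm i a ha, hm i b hb] using hle
  refine lipschitzOnWith_of_abs_update_sub_le fun p hp j c hc => ?_
  rw [show f p = f (update p j (p j)) by rw [update_eq_self]]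
  rcases le_total (p j) c with h | h
  · exact hinc j p hp _ (hp j trivial) c hc h
  · rw [abs_sub_comm, abs_sub_comm c]
    exact hinc j p hp c hc _ (hp j trivial) h

lemma MixedDiffNonnegOn.congr {g : Pt n → ℝ} {S : Finset (Fin n)}
    (h : MixedDiffNonnegOn (Set.univ.pi δ) f S) (hfg : Set.EqOn f g (Set.univ.pi δ)) :
    MixedDiffNonnegOn (Set.univ.pi δ) g S := by
  intro lo hlo hi hhi hle hoff
  convert h lo hlo hi hhi hle hoff using 1
  exact sum_congr rfl fun T _ => by rw [hfg (piecewise_mem_set_pi T hhi hlo)]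

lemma MixedDiffNonnegOn.closure {S : Finset (Fin n)} (hf : Continuous f)
    (h : MixedDiffNonnegOn (Set.univ.pi δ) f S) :
    MixedDiffNonnegOn (closure (Set.univ.pi δ)) f S := by
  intro lo hlo hi hhi hle hoff
  by_cases hdeg : ∃ i ∈ S, lo i = hi i
  · obtain ⟨i, hiS, heq⟩ := hdeg
    exact (mixedDiff_eq_zero_of_eq f hiS heq).ge
  push Not at hdeg
  -- approximate `(lo, hi)` by mesh pairs that are strictly ordered along `S`, then
  -- collapse the coordinates off `S` so that the approximants are boxes of the same shape
  set U : Set (Pt n × Pt n) := {p | ∀ i ∈ S, p.1 i < p.2 i}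
  have hU : IsOpen U := by
    simp only [U, Set.ofPred_forall]
    exact isOpen_biInter_finset fun i _ => isOpen_lt (by fun_prop) (by fun_prop)
  have hmem : (lo, hi) ∈ _root_.closure (U ∩ Set.univ.pi δ ×ˢ Set.univ.pi δ) :=
    hU.inter_closure ⟨fun i hi => (hle i).lt_of_ne (hdeg i hi), by
      rw [closure_prod_eq]; exact ⟨hlo, hhi⟩⟩
  have hg : Continuous fun p : Pt n × Pt n => mixedDiff f p.1 (S.piecewise p.2 p.1) S :=
    continuous_finsetSum _ fun T _ => continuous_const.mul <| hf.comp <|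
      (continuous_snd.finset_piecewise continuous_fst S).finset_piecewise continuous_fst T
  have := closure_minimal (t := {p : Pt n × Pt n | 0 ≤ mixedDiff f p.1 (S.piecewise p.2 p.1) S})
    ?_ (isClosed_le continuous_const hg) hmem
  · have hpw : S.piecewise hi lo = hi :=
      funext fun i => by by_cases hiS : i ∈ S <;> simp [hiS, hoff]
    simpa [hpw] using this
  rintro ⟨a, b⟩ ⟨hab, ha, hb⟩
  refine h a ha _ (piecewise_mem_set_pi S hb ha) (fun i => ?_) fun i hi => ?_
  · by_cases hiS : i ∈ S
    · simpa [hiS] using (hab i hiS).le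
    · simp [hiS]
  · simp [hi]

lemma kIncreasingOn_cubeSet_of_mesh {k : ℕ} (hf : Continuous f)
    (hdense : ∀ i, Set.Icc 0 1 ⊆ closure (δ i))
    (hk : ∀ S : Finset (Fin n), #S = k → MixedDiffNonnegOn (Set.univ.pi δ) f S) :
    KIncreasingOn k (cubeSet n) f := by
  rintro R ⟨hlo, hhi, hle, hcard⟩ -
  have hcube : ∀ x : Pt n, inCube x → x ∈ closure (Set.univ.pi δ) := fun x hx => by
    rw [closure_pi_set]
    exact fun i _ => hdense i (hx i)
  rw [vvol_eq_mixedDiff k f R hle hcard]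
  exact (hk _ hcard).closure hf _ (hcube _ hlo) _ (hcube _ hhi) hle
    fun i hi => (hle i).eq_of_not_lt (by simpa using hi)

lemma OneIncreasing.le_of_le_on_mesh {A C : Pt n → ℝ} (hA : OneIncreasing A)
    (hδ : ∀ i, δ i ⊆ Set.Icc 0 1) (hdense : ∀ i, Set.Icc 0 1 ⊆ closure (δ i))
    (hC : Continuous C) (h1 : ∀ i, (1 : ℝ) ∈ δ i) (hAC : ∀ d ∈ Set.univ.pi δ, A d ≤ C d)
    {x : Pt n} (hx : inCube x) : A x ≤ C x := by
  have hmem : x ∈ closure (Set.univ.pi fun i => δ i ∩ Set.Ici (x i)) := by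
    rw [closure_pi_set]
    exact fun i _ => mem_closure_inter_Ici (hdense i) (h1 i) (hx i)
  refine closure_minimal (t := {y | A x ≤ C y}) (fun d hd => ?_)
    (isClosed_le continuous_const hC) hmem
  have hd' : d ∈ Set.univ.pi δ := fun i _ => (hd i trivial).1
  exact (hA x d hx (fun i => hδ i (hd' i trivial)) fun i => (hd i trivial).2).trans (hAC d hd')

lemma OneIncreasing.ge_of_ge_on_mesh {B C : Pt n → ℝ} (hB : OneIncreasing B)
    (hδ : ∀ i, δ i ⊆ Set.Icc 0 1) (hdense : ∀ i, Set.Icc 0 1 ⊆ closure (δ i))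
    (hC : Continuous C) (h0 : ∀ i, (0 : ℝ) ∈ δ i) (hCB : ∀ d ∈ Set.univ.pi δ, C d ≤ B d)
    {x : Pt n} (hx : inCube x) : C x ≤ B x := by
  have hmem : x ∈ closure (Set.univ.pi fun i => δ i ∩ Set.Iic (x i)) := by
    rw [closure_pi_set]
    exact fun i _ => mem_closure_inter_Iic (hdense i) (h0 i) (hx i)
  refine closure_minimal (t := {y | C y ≤ B x}) (fun d hd => ?_)
    (isClosed_le hC continuous_const) hmem
  have hd' : d ∈ Set.univ.pi δ := fun i _ => (hd i trivial).1
  exact (hCB d hd').trans (hB d x (fun i => hδ i (hd' i trivial)) hx fun i => (hd i trivial).2)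

end Mesh

section Between

variable {A B C : Pt n → ℝ} {D : Set (Pt n)}

lemma Grounded.of_between (hA : Grounded A) (hB : Grounded B) (hD : D ⊆ cubeSet n)
    (h : ∀ d ∈ D, A d ≤ C d ∧ C d ≤ B d) {x : Pt n} (hx : x ∈ D) (h0 : ∃ i, x i = 0) :
    C x = 0 := by
  linarith [h x hx, hA x (hD hx) h0, hB x (hD hx) h0]

lemma UniformMarginals.of_between (hA : UniformMarginals A) (hB : UniformMarginals B)
    (h : ∀ d ∈ D, A d ≤ C d ∧ C d ≤ B d) {i : Fin n} {t : ℝ} (ht : t ∈ Set.Icc 0 1)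
    (hD : update (fun _ => 1) i t ∈ D) : C (update (fun _ => 1) i t) = t := by
  linarith [h _ hD, hA i t ht, hB i t ht]

end Between

end KIncr

open KIncr
theorem stmt16_general (n k : ℕ) (hk2 : 2 ≤ k) (hkn : k ≤ n)
    (A B : Pt n → ℝ) (hA : Semicopula A) (hB : Semicopula B)
    (D : Set (Pt n)) (hD : IsMesh D)
    (C : Pt n → ℝ)
    (hCincr : KIncreasingOn k D C)
    (hCsand : ∀ d ∈ D, A d ≤ C d ∧ C d ≤ B d) :
    ∃ C' : Pt n → ℝ, KIncreasingOn k (cubeSet n) C' ∧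
      (∀ d ∈ D, C' d = C d) ∧
      (∀ x : Pt n, inCube x → A x ≤ C' x ∧ C' x ≤ B x) := by
  obtain ⟨δ, hδ, rfl⟩ := hD
  choose hδI _ _ hdense h0 h1 using hδ
  rw [show {x : Pt n | ∀ i, x i ∈ δ i} = Set.univ.pi δ by ext; simp] at hCincr hCsand ⊢
  have hcube : Set.univ.pi δ ⊆ cubeSet n := fun x hx i => hδI i (hx i trivial)
  have hCS : ∀ S : Finset (Fin n), S.card ≤ k → MixedDiffNonnegOn (Set.univ.pi δ) C S :=
    fun _ => mixedDiffNonnegOn_of_card_le hkn hδI h0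
      (fun _ => hA.1.of_between hB.1 hcube hCsand)
      fun _ => mixedDiffNonnegOn_of_kIncreasingOn hδI hCincr
  have hmarg : ∀ i, ∀ s ∈ δ i, C (Function.update (fun _ => 1) i s) = s := fun i _ hs =>
    hA.2.2.of_between hB.2.2 hCsand (hδI i hs) (update_mem_univ_pi (fun j _ => h1 j) hs)
  obtain ⟨C', hC'lip, hCC'⟩ := (lipschitzOnWith_of_mixedDiffNonnegOn
    (fun i _ hx => (hδI i hx).2) h1 (fun i => hCS {i} (by simp; omega))
    (fun i t hti => hCS {t, i} (by simp [hti]; omega)) hmarg).extend_real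
  have hC' := hC'lip.continuous
  refine ⟨C', kIncreasingOn_cubeSet_of_mesh hC' hdense fun S hS => (hCS S hS.le).congr hCC',
    fun d hd => (hCC' hd).symm, fun x hx => ⟨?_, ?_⟩⟩
  · exact hA.2.1.le_of_le_on_mesh hδI hdense hC' h1 (fun d hd => hCC' hd ▸ (hCsand d hd).1) hx
  · exact hB.2.1.ge_of_ge_on_mesh hδI hdense hC' h0 (fun d hd => hCC' hd ▸ (hCsand d hd).2) hx

/-- Proposition 6.2: extension of `C` from the mesh to the
unit cube for semicopula bounds, `k ≥ 2`. -/
theorem stmt16 (n k : ℕ) (hn : 1 ≤ n) (hk2 : 2 ≤ k) (hkn : k ≤ n)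
    (A B : Pt n → ℝ) (hA : Semicopula A) (hB : Semicopula B)
    (hAI : MapsToI A) (hBI : MapsToI B)
    (hAB : ∀ x : Pt n, inCube x → A x ≤ B x)
    (D : Set (Pt n)) (hD : IsMesh D)
    (C : Pt n → ℝ) (hCI : ∀ d ∈ D, C d ∈ Set.Icc (0:ℝ) 1)
    (hCincr : KIncreasingOn k D C)
    (hCsand : ∀ d ∈ D, A d ≤ C d ∧ C d ≤ B d) :
    ∃ C' : Pt n → ℝ, KIncreasingOn k (cubeSet n) C' ∧
      (∀ d ∈ D, C' d = C d) ∧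
      (∀ x : Pt n, inCube x → A x ≤ C' x ∧ C' x ≤ B x) :=
  stmt16_general n k hk2 hkn A B hA hB D hD C hCincr hCsand
end
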